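/- arXiv:2004.12595 — 5 statements merged into one kernel-verified Lean document; each statement's English description precedes it below -/
import Mathlib

section
/- Let 𝔤 and 𝔥 be Lie algebras with a left action ▷ : 𝔥 × 𝔤 → 𝔤 and a right action ◁ : 𝔥 × 𝔤 → 𝔥 satisfying the matched pair compatibility conditions: η ▷ [ξ, ξ'] = [η ▷ ξ, ξ'] + [ξ, η ▷ ξ'] + (η ◁ ξ) ▷ ξ' − (η ◁ ξ') ▷ ξ and [η, η'] ◁ ξ = [η, η' ◁ ξ] + [η ◁ ξ, η'] + η ◁ (η' ▷ ξ) − η' ◁ (η ▷ ξ). Then the bracket on the direct sum 𝔤 ⊕ 𝔥 defined by [(ξ, η), (ξ', η')] = ([ξ, ξ'] + η ▷ ξ' − η' ▷ ξ, [η, η'] + η ◁ ξ' − η' ◁ ξ) satisfies the Jacobi identity and makes 𝔤 ⊕ 𝔥 a Lie algebra (the double cross sum 𝔤 ⋈ 𝔥). -/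
/-!
The bracket is a bilinear map assembled from the two Lie brackets and the two actions, and it is
visibly alternating. In the `g`-component of the Jacobiator, expand `tr η ⁅ξ, ξ'⁆` by the first
compatibility condition and `tr ⁅η, η'⁆ ξ` by the action axiom: what is left is the Jacobi identity
of `g`, the other terms cancelling in pairs up to antisymmetry. The `h`-component is the mirror
image, with the right action and the second compatibility condition.
-/

section

variable {R g h : Type*} [CommRing R] [LieRing g] [LieAlgebra R g] [LieRing h] [LieAlgebra R h]

def doubleCrossBracket (tr : h →ₗ[R] g →ₗ[R] g) (tl : h →ₗ[R] g →ₗ[R] h) :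
    g × h →ₗ[R] g × h →ₗ[R] g × h :=
  LinearMap.mk₂ R
    (fun x y => (⁅x.1, y.1⁆ + tr x.2 y.1 - tr y.2 x.1, ⁅x.2, y.2⁆ + tl x.2 y.1 - tl y.2 x.1))
    (fun x x' y => by ext <;> simp only [Prod.fst_add, Prod.snd_add, add_lie, map_add,
      LinearMap.add_apply] <;> abel)
    (fun c x y => by ext <;> simp only [Prod.smul_fst, Prod.smul_snd, smul_lie, map_smul,
      LinearMap.smul_apply, smul_add, smul_sub])
    (fun x y y' => by ext <;> simp only [Prod.fst_add, Prod.snd_add, lie_add, map_add,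
      LinearMap.add_apply] <;> abel)
    (fun c x y => by ext <;> simp only [Prod.smul_fst, Prod.smul_snd, lie_smul, map_smul,
      LinearMap.smul_apply, smul_add, smul_sub])

variable (tr : h →ₗ[R] g →ₗ[R] g) (tl : h →ₗ[R] g →ₗ[R] h)

@[simp]
lemma doubleCrossBracket_apply (x y : g × h) :
    doubleCrossBracket tr tl x y =
      (⁅x.1, y.1⁆ + tr x.2 y.1 - tr y.2 x.1, ⁅x.2, y.2⁆ + tl x.2 y.1 - tl y.2 x.1) :=
  rfl

lemma doubleCrossBracket_self (x : g × h) : doubleCrossBracket tr tl x x = 0 := by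
  ext <;> simp

lemma doubleCrossBracket_swap (x y : g × h) :
    doubleCrossBracket tr tl y x = -doubleCrossBracket tr tl x y := by
  ext <;> simp only [doubleCrossBracket_apply, Prod.fst_neg, Prod.snd_neg] <;>
    rw [← lie_skew] <;> abel

lemma fst_doubleCrossBracket_jacobi
    (htr : ∀ (η η' : h) (ξ : g), tr ⁅η, η'⁆ ξ = tr η (tr η' ξ) - tr η' (tr η ξ))
    (hcomp : ∀ (η : h) (ξ ξ' : g),
      tr η ⁅ξ, ξ'⁆ = ⁅tr η ξ, ξ'⁆ + ⁅ξ, tr η ξ'⁆ + tr (tl η ξ) ξ' - tr (tl η ξ') ξ)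
    (x y z : g × h) :
    (doubleCrossBracket tr tl x (doubleCrossBracket tr tl y z) +
      doubleCrossBracket tr tl y (doubleCrossBracket tr tl z x) +
      doubleCrossBracket tr tl z (doubleCrossBracket tr tl x y)).1 = 0 := by
  obtain ⟨x₁, x₂⟩ := x; obtain ⟨y₁, y₂⟩ := y; obtain ⟨z₁, z₂⟩ := z
  simp only [doubleCrossBracket_apply, Prod.fst_add, lie_add, lie_sub, map_add, map_sub,
    LinearMap.add_apply, LinearMap.sub_apply, htr, hcomp]
  rw [← lie_skew (tr x₂ y₁) z₁, ← lie_skew (tr y₂ z₁) x₁, ← lie_skew (tr z₂ x₁) y₁,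
    ← lie_jacobi x₁ y₁ z₁]
  abel

lemma snd_doubleCrossBracket_jacobi
    (htl : ∀ (η : h) (ξ ξ' : g), tl η ⁅ξ, ξ'⁆ = tl (tl η ξ) ξ' - tl (tl η ξ') ξ)
    (hcomp : ∀ (η η' : h) (ξ : g),
      tl ⁅η, η'⁆ ξ = ⁅η, tl η' ξ⁆ + ⁅tl η ξ, η'⁆ + tl η (tr η' ξ) - tl η' (tr η ξ))
    (x y z : g × h) :
    (doubleCrossBracket tr tl x (doubleCrossBracket tr tl y z) +
      doubleCrossBracket tr tl y (doubleCrossBracket tr tl z x) +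
      doubleCrossBracket tr tl z (doubleCrossBracket tr tl x y)).2 = 0 := by
  obtain ⟨x₁, x₂⟩ := x; obtain ⟨y₁, y₂⟩ := y; obtain ⟨z₁, z₂⟩ := z
  simp only [doubleCrossBracket_apply, Prod.snd_add, lie_add, lie_sub, map_add, map_sub,
    LinearMap.add_apply, LinearMap.sub_apply, htl, hcomp]
  rw [← lie_skew (tl y₂ x₁) z₂, ← lie_skew (tl z₂ y₁) x₂, ← lie_skew (tl x₂ z₁) y₂,
    ← lie_jacobi x₂ y₂ z₂]
  abel

lemma doubleCrossBracket_jacobi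
    (htr : ∀ (η η' : h) (ξ : g), tr ⁅η, η'⁆ ξ = tr η (tr η' ξ) - tr η' (tr η ξ))
    (htl : ∀ (η : h) (ξ ξ' : g), tl η ⁅ξ, ξ'⁆ = tl (tl η ξ) ξ' - tl (tl η ξ') ξ)
    (hcomp₁ : ∀ (η : h) (ξ ξ' : g),
      tr η ⁅ξ, ξ'⁆ = ⁅tr η ξ, ξ'⁆ + ⁅ξ, tr η ξ'⁆ + tr (tl η ξ) ξ' - tr (tl η ξ') ξ)
    (hcomp₂ : ∀ (η η' : h) (ξ : g),
      tl ⁅η, η'⁆ ξ = ⁅η, tl η' ξ⁆ + ⁅tl η ξ, η'⁆ + tl η (tr η' ξ) - tl η' (tr η ξ))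
    (x y z : g × h) :
    doubleCrossBracket tr tl x (doubleCrossBracket tr tl y z) +
      doubleCrossBracket tr tl y (doubleCrossBracket tr tl z x) +
      doubleCrossBracket tr tl z (doubleCrossBracket tr tl x y) = 0 :=
  Prod.ext (fst_doubleCrossBracket_jacobi tr tl htr hcomp₁ x y z)
    (snd_doubleCrossBracket_jacobi tr tl htl hcomp₂ x y z)

end

/-- **Matched pair / double cross sum of Lie algebras.**
Given Lie algebras `g` and `h` over a field `k`, a left Lie algebra action
`tr : h → g → g` and a right Lie algebra action `tl : h → g → h` (both bilinear)
satisfying the matched pair compatibility conditions, the bracket on `g ⊕ h`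
defined by `[(ξ,η),(ξ',η')] = ([ξ,ξ'] + η▷ξ' − η'▷ξ, [η,η'] + η◁ξ' − η'◁ξ)`
is alternating, antisymmetric, bilinear, and satisfies the Jacobi identity;
hence it makes `g ⊕ h` into a Lie algebra (the double cross sum `g ⋈ h`). -/
theorem double_cross_sum_is_lie_algebra
    (k : Type*) [Field k] (g h : Type*)
    [LieRing g] [LieAlgebra k g] [LieRing h] [LieAlgebra k h]
    (tr : h →ₗ[k] g →ₗ[k] g) (tl : h →ₗ[k] g →ₗ[k] h)
    -- `tr` is a left Lie algebra action of `h` on `g`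
    (htr : ∀ (η η' : h) (ξ : g), tr ⁅η, η'⁆ ξ = tr η (tr η' ξ) - tr η' (tr η ξ))
    -- `tl` is a right Lie algebra action of `g` on `h`
    (htl : ∀ (η : h) (ξ ξ' : g), tl η ⁅ξ, ξ'⁆ = tl (tl η ξ) ξ' - tl (tl η ξ') ξ)
    -- matched pair compatibility conditions
    (hcomp1 : ∀ (η : h) (ξ ξ' : g),
      tr η ⁅ξ, ξ'⁆ = ⁅tr η ξ, ξ'⁆ + ⁅ξ, tr η ξ'⁆ + tr (tl η ξ) ξ' - tr (tl η ξ') ξ)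
    (hcomp2 : ∀ (η η' : h) (ξ : g),
      tl ⁅η, η'⁆ ξ = ⁅η, tl η' ξ⁆ + ⁅tl η ξ, η'⁆ + tl η (tr η' ξ) - tl η' (tr η ξ))
    -- the double cross sum bracket on `g ⊕ h`
    (b : (g × h) → (g × h) → (g × h))
    (hb : ∀ x y : g × h, b x y =
      (⁅x.1, y.1⁆ + tr x.2 y.1 - tr y.2 x.1, ⁅x.2, y.2⁆ + tl x.2 y.1 - tl y.2 x.1)) :
    -- `b` is alternating
    (∀ x : g × h, b x x = 0) ∧
    -- `b` is antisymmetric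
    (∀ x y : g × h, b x y = - b y x) ∧
    -- `b` satisfies the Jacobi identity
    (∀ x y z : g × h, b x (b y z) + b y (b z x) + b z (b x y) = 0) ∧
    -- `b` is bilinear
    (∀ x y z : g × h, b (x + y) z = b x z + b y z) ∧
    (∀ x y z : g × h, b x (y + z) = b x y + b x z) ∧
    (∀ (c : k) (x y : g × h), b (c • x) y = c • b x y) ∧
    (∀ (c : k) (x y : g × h), b x (c • y) = c • b x y) := by
  obtain rfl : b = fun x y => doubleCrossBracket tr tl x y := funext₂ hb
  exact ⟨doubleCrossBracket_self tr tl,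
    fun x y => doubleCrossBracket_swap tr tl y x,
    doubleCrossBracket_jacobi tr tl htr htl hcomp1 hcomp2,
    fun x y z => LinearMap.map_add₂ _ x y z,
    fun x y z => map_add _ y z,
    fun c x y => LinearMap.map_smul₂ _ c x y,
    fun c x y => map_smul _ c y⟩
end

section
/- In the matched pair decomposition 𝔗Q = 𝔰 ⋈ 𝔫 of the symmetric contravariant formal tensor fields, the left action of 𝔫 on 𝔰 is given for X = Σ_{k≥2} X^k ∈ 𝔫 and (σ, Y) ∈ 𝔰 by X ▷ (σ, Y) = (0, [X², σ]), where [X², σ] = 2 X^{iℓ} σ_{,ℓ} ∂_{q^i} is a vector field; and the right action of 𝔰 on 𝔫 is given by X ◁ (σ, Y) = Σ_{k≥2} ([X^{k+1}, σ] − L_Y X^k), where L_Y is the Lie derivative along Y. -/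
open scoped BigOperators

noncomputable section

/-- Points of `Q`, modelled in local coordinates as `ℝⁿ`. -/
abbrev Coord (n : ℕ) : Type := Fin n → ℝ

/-- Partial derivative `∂f/∂q^i`. -/
def pd {n : ℕ} (i : Fin n) (f : Coord n → ℝ) : Coord n → ℝ :=
  fun q => fderiv ℝ f q (Pi.single i 1)

/-- The coefficients `X^{i₁…i_k}(q)` of a `k`-th order contravariant tensor field on `Q`. -/
abbrev TF (n k : ℕ) : Type := Coord n → (Fin k → Fin n) → ℝ

/-- A tensor field is smooth if all its coefficients are smooth. -/
def SmoothT {n k : ℕ} (X : TF n k) : Prop := ∀ I, ContDiff ℝ (⊤ : ℕ∞) (fun q => X q I)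

/-- A tensor field is symmetric if its coefficients are symmetric in all indices. -/
def SymmT {n k : ℕ} (X : TF n k) : Prop :=
  ∀ (q : Coord n) (σ : Equiv.Perm (Fin k)) (I : Fin k → Fin n), X q (I ∘ σ) = X q I

/-- The (raw, local coordinate) symmetric Schouten concomitant of a `K`-th order and an
`M`-th order symmetric contravariant tensor field, written with result order `d`
(intended: `d = K + M - 1`):
`[X,Y] = K X^{i_{M+1}…i_{M+K−1}ℓ} ∂_ℓ Y^{i_1…i_M} − M Y^{i_{K+1}…i_{K+M−1}ℓ} ∂_ℓ X^{i_1…i_K}`. -/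
def schouten {n : ℕ} (K M d : ℕ) (X : TF n K) (Y : TF n M) : TF n d :=
  fun q I =>
    (K : ℝ) * ∑ ℓ : Fin n,
        X q (fun j => if _ : (j : ℕ) < K - 1 then
              (if h2 : (M + (j : ℕ)) < d then I ⟨M + (j : ℕ), h2⟩ else ℓ) else ℓ)
          * pd ℓ (fun q' => Y q' (fun j => if h : (j : ℕ) < d then I ⟨(j : ℕ), h⟩ else ℓ)) q
    - (M : ℝ) * ∑ ℓ : Fin n,
        Y q (fun j => if _ : (j : ℕ) < M - 1 then
              (if h2 : (K + (j : ℕ)) < d then I ⟨K + (j : ℕ), h2⟩ else ℓ) else ℓ)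
          * pd ℓ (fun q' => X q' (fun j => if h : (j : ℕ) < d then I ⟨(j : ℕ), h⟩ else ℓ)) q

/-- Symmetrization of the coefficients of a tensor field. -/
def symmetrize {n N : ℕ} (Z : TF n N) : TF n N :=
  fun q I => ((Nat.factorial N : ℝ))⁻¹ * ∑ σ : Equiv.Perm (Fin N), Z q (I ∘ σ)



/-- The space `𝔗Q = ∏_{k ≥ 0} 𝔗^k Q` of symmetric contravariant formal tensor fields. -/
abbrev GT (n : ℕ) : Type := (k : ℕ) → TF n k

/-- The symmetric Schouten concomitant on `𝔗Q`, computed degreewise. -/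
def gbr {n : ℕ} (X Y : GT n) : GT n :=
  fun d => symmetrize (∑ K ∈ Finset.range (d + 2),
    schouten K (d + 1 - K) d (X K) (Y (d + 1 - K)))

/-- Membership in `𝔫 = ∏_{k ≥ 2} 𝔗^k Q`. -/
def InN {n : ℕ} (X : GT n) : Prop := X 0 = 0 ∧ X 1 = 0

/-- The element `(σ, Y) ∈ 𝔰 = C^∞(Q) ⋊ 𝔛(Q) ⊆ 𝔗Q`. -/
def sEmb {n : ℕ} (σ : Coord n → ℝ) (Yv : Coord n → Coord n) : GT n
  | 0 => fun q _ => σ q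
  | 1 => fun q I => Yv q (I 0)
  | _ + 2 => 0

/-- The bracket `[X^{k+1}, σ] = (k+1) X^{i₁…i_k ℓ} σ_{,ℓ} ∂_{q^{i₁}} ⊗ … ⊗ ∂_{q^{i_k}}`
of a `(k+1)`-th order tensor field with a function. -/
def brFn {n k : ℕ} (X : TF n (k + 1)) (σ : Coord n → ℝ) : TF n k :=
  fun q I => ((k : ℝ) + 1) * ∑ ℓ : Fin n, X q (Fin.snoc I ℓ) * pd ℓ σ q

/-- The Lie derivative `L_Y X^k` of a `k`-th order contravariant tensor field
along a vector field `Y`: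
`(L_Y X)^{i₁…i_k} = Y^ℓ ∂_ℓ X^{i₁…i_k} − Σ_a X^{i₁…ℓ…i_k} ∂_ℓ Y^{i_a}`. -/
def lieD {n k : ℕ} (Yv : Coord n → Coord n) (X : TF n k) : TF n k :=
  fun q I =>
    (∑ ℓ : Fin n, Yv q ℓ * pd ℓ (fun q' => X q' I) q)
      - ∑ a : Fin k, ∑ ℓ : Fin n,
          X q (Function.update I a ℓ) * pd ℓ (fun q' => Yv q' (I a)) q

namespace MPAux


lemma sEmb_hi {n : ℕ} (σ : Coord n → ℝ) (Yv : Coord n → Coord n) (m : ℕ) (hm : 2 ≤ m) :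
    sEmb σ Yv m = 0 := by
  obtain ⟨j, rfl⟩ : ∃ j, m = j + 2 := ⟨m - 2, by omega⟩
  rfl

lemma schouten_right_zero {n : ℕ} (K M d : ℕ) (X : TF n K) :
    schouten K M d X (0 : TF n M) = 0 := by
  funext q I
  simp [schouten, pd]

lemma schouten_left_zero {n : ℕ} (K M d : ℕ) (Y : TF n M) :
    schouten K M d (0 : TF n K) Y = 0 := by
  funext q I
  simp [schouten, pd]

lemma symmetrize_zero {n N : ℕ} : symmetrize (0 : TF n N) = 0 := by
  funext q I; simp [symmetrize]

lemma symmetrize_add {n N : ℕ} (Z W : TF n N) :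
    symmetrize (Z + W) = symmetrize Z + symmetrize W := by
  funext q I
  simp [symmetrize, Finset.sum_add_distrib, mul_add]

lemma symmetrize_symm {n N : ℕ} (Z : TF n N) (hZ : SymmT Z) : symmetrize Z = Z := by
  funext q I
  have h : ∀ τ : Equiv.Perm (Fin N), Z q (I ∘ τ) = Z q I := fun τ => hZ q τ I
  simp only [symmetrize, h, Finset.sum_const, Finset.card_univ, Fintype.card_perm,
    Fintype.card_fin, nsmul_eq_mul]
  rw [inv_mul_cancel_left₀]
  exact_mod_cast (Nat.factorial_ne_zero N)

def extP {k : ℕ} (τ : Equiv.Perm (Fin k)) : Equiv.Perm (Fin (k + 1)) where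
  toFun := Fin.snoc (fun i => (τ i).castSucc) (Fin.last k)
  invFun := Fin.snoc (fun i => (τ.symm i).castSucc) (Fin.last k)
  left_inv := by
    intro j
    induction j using Fin.lastCases with
    | last => simp
    | cast i => simp
  right_inv := by
    intro j
    induction j using Fin.lastCases with
    | last => simp
    | cast i => simp

lemma snoc_comp_extP {n k : ℕ} (I : Fin k → Fin n) (ℓ : Fin n) (τ : Equiv.Perm (Fin k)) :
    (Fin.snoc I ℓ : Fin (k+1) → Fin n) ∘ (extP τ) = Fin.snoc (I ∘ τ) ℓ := by
  funext j
  induction j using Fin.lastCases with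
  | last => simp [extP]
  | cast i => simp [extP]

lemma symmT_brFn {n k : ℕ} (X : TF n (k + 1)) (hX : SymmT X) (σ : Coord n → ℝ) :
    SymmT (brFn X σ) := by
  intro q τ I
  unfold brFn
  congr 1
  refine Finset.sum_congr rfl fun ℓ _ => ?_
  rw [← snoc_comp_extP, hX]



lemma schouten_top {n k : ℕ} (X : TF n (k + 1)) (σ : Coord n → ℝ) (Yv : Coord n → Coord n) :
    schouten (k + 1) 0 k X (sEmb σ Yv 0) = brFn X σ := by
  funext q I
  unfold schouten brFn
  have h1 : ∀ ℓ : Fin n,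
      (fun j : Fin (k + 1) => if _ : (j : ℕ) < k + 1 - 1 then
          (if h2 : 0 + (j : ℕ) < k then I ⟨0 + (j : ℕ), h2⟩ else ℓ) else ℓ)
        = (Fin.snoc I ℓ : Fin (k+1) → Fin n) := by
    intro ℓ; funext j
    induction j using Fin.lastCases with
    | last => simp
    | cast i =>
      have h : ((i.castSucc : Fin (k+1)) : ℕ) < k := i.isLt
      simp only [Nat.add_sub_cancel, Fin.snoc_castSucc]
      rw [dif_pos h, dif_pos (by simpa using h)]
      congr 1
      ext
      simp
  have h2 : ∀ ℓ : Fin n, (fun q' => sEmb σ Yv 0 q'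
      (fun j : Fin 0 => if h : (j : ℕ) < k then I ⟨(j : ℕ), h⟩ else ℓ)) = σ := by
    intro ℓ; funext q'; rfl
  simp only [h1, h2]
  push_cast
  ring



/-- The cyclic permutation of `Fin (m+1)` sending `i < m` to `i+1` and `m` to `0`. -/
def rotP (m : ℕ) : Equiv.Perm (Fin (m + 1)) where
  toFun := Fin.snoc Fin.succ 0
  invFun := Fin.cons (Fin.last m) Fin.castSucc
  left_inv := by
    intro j
    induction j using Fin.lastCases with
    | last => simp
    | cast i => simp
  right_inv := by
    intro j
    induction j using Fin.cases with
    | zero => simp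
    | succ i => simp

lemma rotP_castSucc (m : ℕ) (i : Fin m) : rotP m i.castSucc = i.succ := by simp [rotP]
lemma rotP_last (m : ℕ) : rotP m (Fin.last m) = 0 := by simp [rotP]

lemma schouten_mid {n m : ℕ} (X : TF n (m + 2)) (hX : SymmT X)
    (σ : Coord n → ℝ) (Yv : Coord n → Coord n) :
    symmetrize (schouten (m + 2) 1 (m + 2) X (sEmb σ Yv 1)) = (fun q I =>
      (∑ a : Fin (m + 2), ∑ ℓ : Fin n,
          X q (Function.update I a ℓ) * pd ℓ (fun q' => Yv q' (I a)) q)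
        - ∑ ℓ : Fin n, Yv q ℓ * pd ℓ (fun q' => X q' I) q) := by
  funext q I
  -- pointwise form of the Schouten term
  have hA : ∀ J : Fin (m + 2) → Fin n,
      schouten (m + 2) 1 (m + 2) X (sEmb σ Yv 1) q J
        = ((m : ℝ) + 2) * (∑ ℓ : Fin n,
            X q (Function.update J 0 ℓ) * pd ℓ (fun q' => Yv q' (J 0)) q)
          - ∑ ℓ : Fin n, Yv q ℓ * pd ℓ (fun q' => X q' J) q := by
    intro J
    unfold schouten
    have hix : ∀ ℓ : Fin n,
        (fun j : Fin (m + 2) => if _ : (j : ℕ) < m + 2 - 1 then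
            (if h2 : 1 + (j : ℕ) < m + 2 then J ⟨1 + (j : ℕ), h2⟩ else ℓ) else ℓ)
          = (Function.update J 0 ℓ) ∘ (rotP (m + 1)) := by
      intro ℓ; funext j
      induction j using Fin.lastCases with
      | last =>
        have hlt : ¬ ((Fin.last (m + 1) : Fin (m+2)) : ℕ) < m + 2 - 1 := by simp
        rw [dif_neg hlt, Function.comp_apply, rotP_last, Function.update_self]
      | cast i =>
        have h : ((i.castSucc : Fin (m + 2)) : ℕ) < m + 2 - 1 := by
          simpa using i.isLt
        rw [dif_pos h, dif_pos (by omega)]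
        rw [Function.comp_apply, rotP_castSucc]
        rw [Function.update_of_ne (Fin.succ_ne_zero i)]
        congr 1
        ext
        simp [Nat.add_comm]
    have hpd1 : ∀ ℓ : Fin n,
        (fun q' => sEmb σ Yv 1 q'
          (fun j : Fin 1 => if h : (j : ℕ) < m + 2 then J ⟨(j : ℕ), h⟩ else ℓ))
          = fun q' => Yv q' (J 0) := by
      intro ℓ; funext q'
      show Yv q' (if h : ((0 : Fin 1) : ℕ) < m + 2 then J ⟨_, h⟩ else ℓ) = _
      rw [dif_pos (by omega)]
      congr 1
    have hYix : ∀ ℓ : Fin n,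
        sEmb σ Yv 1 q (fun j : Fin 1 => if _ : (j : ℕ) < 1 - 1 then
            (if h2 : m + 2 + (j : ℕ) < m + 2 then J ⟨m + 2 + (j : ℕ), h2⟩ else ℓ) else ℓ)
          = Yv q ℓ := by
      intro ℓ
      show Yv q (if _ : ((0 : Fin 1) : ℕ) < 1 - 1 then _ else ℓ) = _
      rw [dif_neg (by omega)]
    have hpd2 : ∀ ℓ : Fin n,
        (fun q' => X q' (fun j : Fin (m + 2) =>
            if h : (j : ℕ) < m + 2 then J ⟨(j : ℕ), h⟩ else ℓ))
          = fun q' => X q' J := by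
      intro ℓ; funext q'
      congr 1
      funext j
      rw [dif_pos j.isLt]
    have hXrot : ∀ ℓ : Fin n,
        X q ((Function.update J 0 ℓ) ∘ (rotP (m + 1))) = X q (Function.update J 0 ℓ) :=
      fun ℓ => hX q (rotP (m + 1)) _
    simp only [hix, hpd1, hYix, hpd2, hXrot]
    push_cast
    ring
  -- now symmetrize
  have hupd : ∀ (τ : Equiv.Perm (Fin (m + 2))) (ℓ : Fin n),
      X q (Function.update (I ∘ τ) 0 ℓ) = X q (Function.update I (τ 0) ℓ) := by
    intro τ ℓ
    have : Function.update I (τ 0) ℓ ∘ τ = Function.update (I ∘ τ) 0 ℓ := by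
      rw [Function.update_comp_equiv]
      simp
    rw [← this, hX]
  have hAτ : ∀ τ : Equiv.Perm (Fin (m + 2)),
      schouten (m + 2) 1 (m + 2) X (sEmb σ Yv 1) q (I ∘ τ)
        = ((m : ℝ) + 2) * (∑ ℓ : Fin n,
            X q (Function.update I (τ 0) ℓ) * pd ℓ (fun q' => Yv q' (I (τ 0))) q)
          - ∑ ℓ : Fin n, Yv q ℓ * pd ℓ (fun q' => X q' I) q := by
    intro τ
    rw [hA (I ∘ τ)]
    have h1 : (fun q' => X q' (I ∘ τ)) = fun q' => X q' I := by
      funext q'; exact hX q' τ I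
    simp only [Function.comp_apply, hupd, h1]
  -- define G
  set G : Fin (m + 2) → ℝ := fun a => ∑ ℓ : Fin n,
      X q (Function.update I a ℓ) * pd ℓ (fun q' => Yv q' (I a)) q with hG
  set P : ℝ := ∑ ℓ : Fin n, Yv q ℓ * pd ℓ (fun q' => X q' I) q with hP
  have hsum : ∑ τ : Equiv.Perm (Fin (m + 2)), G (τ 0)
      = (Nat.factorial (m + 1) : ℝ) * ∑ a : Fin (m + 2), G a := by
    rw [← Equiv.sum_comp (Equiv.Perm.decomposeFin.symm) (fun τ => G (τ 0))]
    simp only [Fintype.sum_prod_type, Equiv.Perm.decomposeFin_symm_apply_zero]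
    simp [Finset.sum_const, Finset.card_univ, Fintype.card_perm, mul_comm,
      Finset.mul_sum]
  show (((m + 2).factorial : ℝ))⁻¹ * ∑ τ : Equiv.Perm (Fin (m + 2)),
      schouten (m + 2) 1 (m + 2) X (sEmb σ Yv 1) q (I ∘ τ) = _
  have hcard : (Finset.univ : Finset (Equiv.Perm (Fin (m + 2)))).card
      = (m + 2).factorial := by
    simp [Finset.card_univ, Fintype.card_perm]
  calc (((m + 2).factorial : ℝ))⁻¹ * ∑ τ : Equiv.Perm (Fin (m + 2)),
      schouten (m + 2) 1 (m + 2) X (sEmb σ Yv 1) q (I ∘ τ)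
      = (((m + 2).factorial : ℝ))⁻¹ * ∑ τ : Equiv.Perm (Fin (m + 2)),
        (((m : ℝ) + 2) * G (τ 0) - P) := by
        congr 1
        exact Finset.sum_congr rfl fun τ _ => hAτ τ
    _ = (((m + 2).factorial : ℝ))⁻¹ *
        (((m : ℝ) + 2) * ((Nat.factorial (m + 1) : ℝ) * ∑ a : Fin (m + 2), G a)
          - ((m + 2).factorial : ℝ) * P) := by
        rw [Finset.sum_sub_distrib, Finset.sum_const, ← Finset.mul_sum, hsum, hcard]
        simp [nsmul_eq_mul]
    _ = (∑ a : Fin (m + 2), G a) - P := by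
        have hf : ((m + 2).factorial : ℝ) = ((m : ℝ) + 2) * ((m + 1).factorial : ℝ) := by
          rw [Nat.factorial_succ]
          push_cast
          ring
        have hne : ((m + 2).factorial : ℝ) ≠ 0 := by
          exact_mod_cast Nat.factorial_ne_zero (m + 2)
        field_simp [hf]
        rw [hf]
        ring


lemma gbr_sEmb {n : ℕ} (X : GT n) (σ : Coord n → ℝ) (Yv : Coord n → Coord n) (d : ℕ) :
    gbr X (sEmb σ Yv) d
      = symmetrize (schouten d 1 d (X d) (sEmb σ Yv 1))
        + symmetrize (schouten (d + 1) 0 d (X (d + 1)) (sEmb σ Yv 0)) := by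
  unfold gbr
  rw [Finset.sum_range_succ, Finset.sum_range_succ]
  have hz : ∑ K ∈ Finset.range d,
      schouten K (d + 1 - K) d (X K) (sEmb σ Yv (d + 1 - K)) = 0 := by
    refine Finset.sum_eq_zero fun K hK => ?_
    have h2 : 2 ≤ d + 1 - K := by
      have := Finset.mem_range.mp hK; omega
    rw [sEmb_hi σ Yv _ h2, schouten_right_zero]
  rw [hz, zero_add]
  rw [show d + 1 - d = 1 from by omega]
  rw [show d + 1 - (d + 1) = 0 from by omega]
  rw [symmetrize_add]

end MPAux

open MPAux in
/-- **The mutual actions of the matched pair `𝔗Q = 𝔰 ⋈ 𝔫`.**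
For `X = Σ_{k≥2} X^k ∈ 𝔫` and `(σ, Y) ∈ 𝔰`, the matched pair actions defined
by decomposing `[X, (σ, Y)] = X ▷ (σ, Y) + X ◁ (σ, Y) ∈ 𝔰 ⊕ 𝔫` are given by
`X ▷ (σ, Y) = (0, [X², σ])` with `[X², σ] = 2 X^{iℓ} σ_{,ℓ} ∂_{q^i}`, and
`X ◁ (σ, Y) = Σ_{k≥2} ([X^{k+1}, σ] − L_Y X^k)`. -/
theorem matched_pair_actions_on_tensor_fields
    (n : ℕ) (X : GT n) (hXn : InN X)
    (hXsm : ∀ k, SmoothT (X k)) (hXsym : ∀ k, SymmT (X k))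
    (σ : Coord n → ℝ) (Yv : Coord n → Coord n)
    (hσ : ContDiff ℝ (⊤ : ℕ∞) σ) (hY : ContDiff ℝ (⊤ : ℕ∞) Yv) :
    -- the `𝔰`-component of `[X, (σ, Y)]` is `(0, [X², σ])` :
    (gbr X (sEmb σ Yv) 0 = 0) ∧
    (gbr X (sEmb σ Yv) 1 = brFn (X 2) σ) ∧
    -- the `𝔫`-component of `[X, (σ, Y)]` is `Σ_{k≥2} ([X^{k+1}, σ] − L_Y X^k)` :
    (∀ k, 2 ≤ k → gbr X (sEmb σ Yv) k = brFn (X (k + 1)) σ - lieD Yv (X k)) := by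
  obtain ⟨hX0, hX1⟩ := hXn
  refine ⟨?_, ?_, ?_⟩
  · rw [gbr_sEmb X σ Yv 0, hX0]
    have h1 : X (0 + 1) = 0 := hX1
    rw [h1, schouten_left_zero, schouten_left_zero, symmetrize_zero, add_zero]
  · rw [gbr_sEmb X σ Yv 1]
    have h1 : X 1 = 0 := hX1
    rw [h1, schouten_left_zero, symmetrize_zero, zero_add,
      schouten_top (X (1 + 1)) σ Yv]
    exact symmetrize_symm _ (symmT_brFn _ (hXsym 2) σ)
  · intro k hk
    obtain ⟨m, rfl⟩ : ∃ m, k = m + 2 := ⟨k - 2, by omega⟩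
    rw [gbr_sEmb X σ Yv (m + 2), schouten_mid (X (m + 2)) (hXsym (m + 2)) σ Yv,
      schouten_top (X (m + 2 + 1)) σ Yv,
      symmetrize_symm _ (symmT_brFn _ (hXsym (m + 2 + 1)) σ)]
    funext q I
    simp only [Pi.add_apply, Pi.sub_apply, lieD]
    ring


end
end

section
/- The space m^∞_{Q×{0}} of flat functions on T*Q — smooth functions all of whose partial derivatives with respect to the momentum variables (of all orders, including order zero) vanish on the zero section Q × {0} — is a Lie ideal of C^∞(T*Q) with respect to the canonical Poisson bracket. In particular, if h is flat, then each partial derivative ∂h/∂q^i is also flat. -/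
noncomputable section

/-- Functions on the cotangent bundle `T*Q`, in Darboux coordinates `(q, p)`. -/
abbrev PhaseFn (n : ℕ) : Type := Coord n → Coord n → ℝ

/-- Partial derivative `∂F/∂q^ℓ` of a function on `T*Q`. -/
def pdq {n : ℕ} (ℓ : Fin n) (F : PhaseFn n) : PhaseFn n :=
  fun q p => fderiv ℝ (fun q' => F q' p) q (Pi.single ℓ 1)

/-- Partial derivative `∂F/∂p_ℓ` of a function on `T*Q`. -/
def pdp {n : ℕ} (ℓ : Fin n) (F : PhaseFn n) : PhaseFn n :=
  fun q p => fderiv ℝ (F q) p (Pi.single ℓ 1)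

/-- The canonical Poisson bracket
`{h, g} = (∂h/∂q^ℓ)(∂g/∂p_ℓ) − (∂g/∂q^ℓ)(∂h/∂p_ℓ)` on `T*Q`. -/
def pois {n : ℕ} (h g : PhaseFn n) : PhaseFn n :=
  fun q p => ∑ ℓ : Fin n,
    (pdq ℓ h q p * pdp ℓ g q p - pdq ℓ g q p * pdp ℓ h q p)

/-- Joint smoothness of a function on `T*Q`. -/
def SmoothP {n : ℕ} (F : PhaseFn n) : Prop :=
  ContDiff ℝ (⊤ : ℕ∞) (fun z : Coord n × Coord n => F z.1 z.2)



/-- `h` is a flat function: all of its partial derivatives with respect to the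
momentum variables (of all orders, including order zero) vanish on the zero
section `Q × {0}`. -/
def FlatP {n : ℕ} (h : PhaseFn n) : Prop :=
  ∀ (q : Coord n) (k : ℕ), iteratedFDeriv ℝ k (h q) (0 : Coord n) = 0

namespace FlatAux

variable {n : ℕ}

lemma slice_p_smooth {F : Coord n × Coord n → ℝ} (hF : ContDiff ℝ (⊤ : ℕ∞) F) (q : Coord n) :
    ContDiff ℝ (⊤ : ℕ∞) (fun p : Coord n => F (q, p)) :=
  hF.comp (contDiff_const.prodMk contDiff_id)

lemma fderiv_slice_p {F : Coord n × Coord n → ℝ} (hF : ContDiff ℝ (⊤ : ℕ∞) F) (q p w : Coord n) :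
    fderiv ℝ (fun p' => F (q, p')) p w = fderiv ℝ F (q, p) (0, w) := by
  have h1 : HasFDerivAt (fun p' : Coord n => F (q, p'))
      ((fderiv ℝ F (q, p)).comp (ContinuousLinearMap.inr ℝ (Coord n) (Coord n))) p :=
    ((hF.differentiable (by simp) (q, p)).hasFDerivAt).comp p (hasFDerivAt_prodMk_right q p)
  rw [h1.fderiv]; rfl

lemma fderiv_slice_q {F : Coord n × Coord n → ℝ} (hF : ContDiff ℝ (⊤ : ℕ∞) F) (q p v : Coord n) :
    fderiv ℝ (fun q' => F (q', p)) q v = fderiv ℝ F (q, p) (v, 0) := by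
  have h1 : HasFDerivAt (fun q' : Coord n => F (q', p))
      ((fderiv ℝ F (q, p)).comp (ContinuousLinearMap.inl ℝ (Coord n) (Coord n))) q :=
    ((hF.differentiable (by simp) (q, p)).hasFDerivAt).comp q (hasFDerivAt_prodMk_left q p)
  rw [h1.fderiv]; rfl

lemma fderiv_eval {D A : Type*} [NormedAddCommGroup D] [NormedSpace ℝ D]
    [NormedAddCommGroup A] [NormedSpace ℝ A] {Φ : D → A →L[ℝ] ℝ} {z : D}
    (hΦ : DifferentiableAt ℝ Φ z) (w : A) (u : D) :
    fderiv ℝ (fun z' => Φ z' w) z u = fderiv ℝ Φ z u w := by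
  rw [fderiv_clm_apply hΦ (differentiableAt_const w)]
  simp

lemma iFD_eval {A : Type*} [NormedAddCommGroup A] [NormedSpace ℝ A]
    {f : Coord n → A →L[ℝ] ℝ} (hf : ContDiff ℝ (⊤ : ℕ∞) f) (k : ℕ) (x : Coord n) (w : A)
    (m : Fin k → Coord n) :
    iteratedFDeriv ℝ k (fun p => f p w) x m = (iteratedFDeriv ℝ k f x m) w := by
  rw [show (fun p => f p w) = (ContinuousLinearMap.apply ℝ ℝ w) ∘ f from rfl,
    (ContinuousLinearMap.apply ℝ ℝ w).iteratedFDeriv_comp_left hf.contDiffAt (by exact_mod_cast le_top)]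
  rfl

lemma flat_fderiv {g : Coord n → ℝ} (hg : ContDiff ℝ (⊤ : ℕ∞) g)
    (hflat : ∀ k, iteratedFDeriv ℝ k g 0 = 0) (w : Coord n) (k : ℕ) :
    iteratedFDeriv ℝ k (fun p => fderiv ℝ g p w) 0 = 0 := by
  ext m
  have hg' : ContDiff ℝ (⊤ : ℕ∞) (fderiv ℝ g) := hg.fderiv_right (by simp)
  rw [iFD_eval hg' k 0 w m]
  have h2 := iteratedFDeriv_succ_apply_right (𝕜 := ℝ) (f := g) (x := (0:Coord n)) (n := k)
    (Fin.snoc m w)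
  simp only [Fin.init_snoc, Fin.snoc_last] at h2
  rw [← h2, hflat (k+1)]
  simp

/-- Key interchange lemma: if all pure `p`-derivatives of the slices of `F` vanish at
`p = 0`, then the same holds for the `q`-partial derivatives of `F`. -/
lemma key : ∀ (k : ℕ) (F : Coord n × Coord n → ℝ), ContDiff ℝ (⊤ : ℕ∞) F →
    (∀ q j, iteratedFDeriv ℝ j (fun p => F (q, p)) 0 = 0) →
    ∀ (q v : Coord n), iteratedFDeriv ℝ k (fun p => fderiv ℝ F (q, p) (v, 0)) 0 = 0 := by
  intro k
  induction k with
  | zero =>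
    intro F hF hflat q v
    ext m
    rw [iteratedFDeriv_zero_apply]
    have hq : (fun q' : Coord n => F (q', (0:Coord n))) = fun _ => (0:ℝ) := by
      funext q'
      have h0 := congrArg
        (fun Φ : ContinuousMultilinearMap ℝ (fun _ : Fin 0 => Coord n) ℝ => Φ fun _ => 0)
        (hflat q' 0)
      simpa [iteratedFDeriv_zero_apply] using h0
    have : fderiv ℝ F (q, 0) (v, 0) = fderiv ℝ (fun q' => F (q', 0)) q v :=
      (fderiv_slice_q hF q 0 v).symm
    rw [this, hq]
    simp
  | succ k IH =>
    intro F hF hflat q v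
    have hF' : ContDiff ℝ (⊤ : ℕ∞) (fderiv ℝ F) := hF.fderiv_right (by simp)
    have hGsm : ContDiff ℝ (⊤ : ℕ∞) (fun z : Coord n × Coord n => fderiv ℝ F z (v, 0)) :=
      hF'.clm_apply contDiff_const
    ext m
    set w := m (Fin.last k) with hw
    rw [iteratedFDeriv_succ_apply_right]
    have hB' : ContDiff ℝ (⊤ : ℕ∞) (fun p : Coord n => fderiv ℝ F (q, p) (v, 0)) :=
      slice_p_smooth hGsm q
    have e1 := iFD_eval (hB'.fderiv_right (by simp)) k 0 w (Fin.init m)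
    rw [← e1]
    have e2 : (fun p => fderiv ℝ (fun p' : Coord n => fderiv ℝ F (q, p') (v, 0)) p w)
        = fun p => fderiv ℝ (fun z : Coord n × Coord n => fderiv ℝ F z (0, w)) (q, p) (v, 0) := by
      funext p
      have s1 : fderiv ℝ (fun p' : Coord n => fderiv ℝ F (q, p') (v, 0)) p w
          = fderiv ℝ (fun z : Coord n × Coord n => fderiv ℝ F z (v, 0)) (q, p) (0, w) :=
        fderiv_slice_p hGsm q p w
      have s2 : fderiv ℝ (fun z : Coord n × Coord n => fderiv ℝ F z (v, 0)) (q, p) (0, w)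
          = fderiv ℝ (fderiv ℝ F) (q, p) (0, w) (v, 0) :=
        fderiv_eval ((hF'.differentiable (by simp)).differentiableAt) (v, 0) (0, w)
      have s3 : fderiv ℝ (fderiv ℝ F) (q, p) (0, w) (v, 0)
          = fderiv ℝ (fderiv ℝ F) (q, p) (v, 0) (0, w) :=
        (hF.contDiffAt.isSymmSndFDerivAt (by rw [minSmoothness_of_isRCLikeNormedField]; exact WithTop.coe_le_coe.mpr le_top)).eq (0, w) (v, 0)
      have s4 : fderiv ℝ (fun z : Coord n × Coord n => fderiv ℝ F z (0, w)) (q, p) (v, 0)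
          = fderiv ℝ (fderiv ℝ F) (q, p) (v, 0) (0, w) :=
        fderiv_eval ((hF'.differentiable (by simp)).differentiableAt) (0, w) (v, 0)
      rw [s1, s2, s3, ← s4]
    rw [e2]
    have hDsm : ContDiff ℝ (⊤ : ℕ∞) (fun z : Coord n × Coord n => fderiv ℝ F z (0, w)) :=
      hF'.clm_apply contDiff_const
    have hDflat : ∀ q' j, iteratedFDeriv ℝ j
        (fun p => fderiv ℝ F (q', p) (0, w)) 0 = 0 := by
      intro q' j
      have e3 : (fun p => fderiv ℝ F (q', p) (0, w))
          = fun p => fderiv ℝ (fun p' => F (q', p')) p w := by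
        funext p; exact (fderiv_slice_p hF q' p w).symm
      rw [e3]
      exact flat_fderiv (slice_p_smooth hF q') (fun j => hflat q' j) w j
    have := IH (fun z : Coord n × Coord n => fderiv ℝ F z (0, w)) hDsm hDflat q v
    rw [this]
    simp

lemma flat_mul_left {a b : Coord n → ℝ} (ha : ContDiff ℝ (⊤ : ℕ∞) a) (hb : ContDiff ℝ (⊤ : ℕ∞) b)
    (hfa : ∀ k, iteratedFDeriv ℝ k a 0 = 0) (k : ℕ) :
    iteratedFDeriv ℝ k (fun p => a p * b p) 0 = 0 := by
  have hle := (ContinuousLinearMap.mul ℝ ℝ).norm_iteratedFDeriv_le_of_bilinear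
    ha hb (0 : Coord n) (n := k) (by exact_mod_cast le_top)
  have hs : ∑ i ∈ Finset.range (k + 1), (k.choose i : ℝ) * ‖iteratedFDeriv ℝ i a 0‖ *
      ‖iteratedFDeriv ℝ (k - i) b 0‖ = 0 :=
    Finset.sum_eq_zero fun i _ => by rw [hfa i]; simp
  rw [hs, mul_zero] at hle
  exact norm_eq_zero.mp (le_antisymm hle (norm_nonneg _))

lemma flat_mul_right {a b : Coord n → ℝ} (ha : ContDiff ℝ (⊤ : ℕ∞) a) (hb : ContDiff ℝ (⊤ : ℕ∞) b)
    (hfb : ∀ k, iteratedFDeriv ℝ k b 0 = 0) (k : ℕ) :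
    iteratedFDeriv ℝ k (fun p => a p * b p) 0 = 0 := by
  have : (fun p => a p * b p) = fun p => b p * a p := by funext p; ring
  rw [this]
  exact flat_mul_left hb ha hfb k

lemma flat_sub {a b : Coord n → ℝ} (ha : ContDiff ℝ (⊤ : ℕ∞) a) (hb : ContDiff ℝ (⊤ : ℕ∞) b)
    (hfa : ∀ k, iteratedFDeriv ℝ k a 0 = 0) (hfb : ∀ k, iteratedFDeriv ℝ k b 0 = 0)
    (k : ℕ) : iteratedFDeriv ℝ k (fun p => a p - b p) 0 = 0 := by
  have : (fun p => a p - b p) = a + -b := by funext p; simp [sub_eq_add_neg]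
  rw [this]
  rw [iteratedFDeriv_add_apply (f := a) (g := -b) (ha.of_le (by exact_mod_cast le_top)).contDiffAt ((hb.of_le (by exact_mod_cast le_top)).neg).contDiffAt]
  rw [iteratedFDeriv_neg_apply, hfa, hfb]
  simp

lemma flat_sum {ι : Type*} (s : Finset ι) (f : ι → Coord n → ℝ)
    (hsm : ∀ i ∈ s, ContDiff ℝ (⊤ : ℕ∞) (f i))
    (hfl : ∀ i ∈ s, ∀ k, iteratedFDeriv ℝ k (f i) 0 = 0) (k : ℕ) :
    iteratedFDeriv ℝ k (fun p => ∑ i ∈ s, f i p) 0 = 0 := by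
  classical
  induction s using Finset.induction with
  | empty => simp [iteratedFDeriv_zero_fun]
  | @insert x s hx ih =>
    have hx1 : ContDiff ℝ (⊤ : ℕ∞) (f x) := hsm x (Finset.mem_insert_self x s)
    have hs1 : ContDiff ℝ (⊤ : ℕ∞) (fun p => ∑ i ∈ s, f i p) :=
      ContDiff.sum fun i hi => hsm i (Finset.mem_insert_of_mem hi)
    have e : (fun p => ∑ i ∈ insert x s, f i p)
        = f x + fun p => ∑ i ∈ s, f i p := by
      funext p; simp [Finset.sum_insert hx]
    rw [e, iteratedFDeriv_add_apply (hx1.of_le (by exact_mod_cast le_top)).contDiffAt (hs1.of_le (by exact_mod_cast le_top)).contDiffAt,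
      hfl x (Finset.mem_insert_self x s) k,
      ih (fun i hi => hsm i (Finset.mem_insert_of_mem hi))
        (fun i hi => hfl i (Finset.mem_insert_of_mem hi))]
    simp

section Assemble

variable {h : PhaseFn n}

lemma pdq_slice_eq (hh : SmoothP h) (ℓ : Fin n) (q : Coord n) :
    pdq ℓ h q = fun p => fderiv ℝ (fun z : Coord n × Coord n => h z.1 z.2) (q, p)
      (Pi.single ℓ 1, 0) := by
  funext p
  exact fderiv_slice_q hh q p (Pi.single ℓ 1)

lemma pdq_slice_smooth (hh : SmoothP h) (ℓ : Fin n) (q : Coord n) :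
    ContDiff ℝ (⊤ : ℕ∞) (pdq ℓ h q) := by
  rw [pdq_slice_eq hh ℓ q]
  exact slice_p_smooth ((hh.fderiv_right (by simp)).clm_apply contDiff_const) q

lemma pdp_slice_smooth (hh : SmoothP h) (ℓ : Fin n) (q : Coord n) :
    ContDiff ℝ (⊤ : ℕ∞) (pdp ℓ h q) :=
  ((slice_p_smooth hh q).fderiv_right (by simp)).clm_apply contDiff_const

lemma pdq_slice_flat (hh : SmoothP h) (hf : FlatP h) (ℓ : Fin n) (q : Coord n) (k : ℕ) :
    iteratedFDeriv ℝ k (pdq ℓ h q) 0 = 0 := by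
  rw [pdq_slice_eq hh ℓ q]
  exact key k _ hh (fun q' j => hf q' j) q (Pi.single ℓ 1)

lemma pdp_slice_flat (hh : SmoothP h) (hf : FlatP h) (ℓ : Fin n) (q : Coord n) (k : ℕ) :
    iteratedFDeriv ℝ k (pdp ℓ h q) 0 = 0 :=
  flat_fderiv (slice_p_smooth hh q) (hf q) (Pi.single ℓ 1) k

end Assemble

end FlatAux

open FlatAux in
/-- **Flat functions form a Poisson ideal.**
The space `m^∞_{Q×{0}}` of flat functions on `T*Q` is a Lie ideal of
`C^∞(T*Q)` with respect to the canonical Poisson bracket; in particular, if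
`h` is flat then each partial derivative `∂h/∂q^i` is also flat. -/
theorem flat_functions_form_poisson_ideal (n : ℕ) :
    -- ideal property
    (∀ h g : PhaseFn n, SmoothP h → SmoothP g → FlatP h → FlatP (pois h g)) ∧
    (∀ h g : PhaseFn n, SmoothP h → SmoothP g → FlatP g → FlatP (pois h g)) ∧
    -- in particular `∂h/∂q^i` is flat whenever `h` is flat
    (∀ h : PhaseFn n, SmoothP h → FlatP h → ∀ i : Fin n, FlatP (pdq i h)) := by
  refine ⟨?_, ?_, ?_⟩
  · intro h g hh hg hf q k
    exact flat_sum Finset.univ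
      (fun ℓ p => pdq ℓ h q p * pdp ℓ g q p - pdq ℓ g q p * pdp ℓ h q p)
      (fun ℓ _ => ((pdq_slice_smooth hh ℓ q).mul (pdp_slice_smooth hg ℓ q)).sub
        ((pdq_slice_smooth hg ℓ q).mul (pdp_slice_smooth hh ℓ q)))
      (fun ℓ _ k' => flat_sub
        ((pdq_slice_smooth hh ℓ q).mul (pdp_slice_smooth hg ℓ q))
        ((pdq_slice_smooth hg ℓ q).mul (pdp_slice_smooth hh ℓ q))
        (flat_mul_left (pdq_slice_smooth hh ℓ q) (pdp_slice_smooth hg ℓ q)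
          (pdq_slice_flat hh hf ℓ q))
        (flat_mul_right (pdq_slice_smooth hg ℓ q) (pdp_slice_smooth hh ℓ q)
          (pdp_slice_flat hh hf ℓ q)) k') k
  · intro h g hh hg hf q k
    exact flat_sum Finset.univ
      (fun ℓ p => pdq ℓ h q p * pdp ℓ g q p - pdq ℓ g q p * pdp ℓ h q p)
      (fun ℓ _ => ((pdq_slice_smooth hh ℓ q).mul (pdp_slice_smooth hg ℓ q)).sub
        ((pdq_slice_smooth hg ℓ q).mul (pdp_slice_smooth hh ℓ q)))
      (fun ℓ _ k' => flat_sub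
        ((pdq_slice_smooth hh ℓ q).mul (pdp_slice_smooth hg ℓ q))
        ((pdq_slice_smooth hg ℓ q).mul (pdp_slice_smooth hh ℓ q))
        (flat_mul_right (pdq_slice_smooth hh ℓ q) (pdp_slice_smooth hg ℓ q)
          (pdp_slice_flat hg hf ℓ q))
        (flat_mul_left (pdq_slice_smooth hg ℓ q) (pdp_slice_smooth hh ℓ q)
          (pdq_slice_flat hg hf ℓ q)) k') k
  · intro h hh hf i q k
    exact pdq_slice_flat hh hf i q k

end
end

section
/- In the matched pair C^∞₀(T*Q) ≅ ŝ ⋈ n̂, where ŝ consists of functions σ(q) + Y^ℓ(q) p_ℓ affine in momenta and n̂ of formal series Σ_{k≥2} X^{i_1…i_k}(q) p_{i_1}…p_{i_k}, the left action of n̂ on ŝ is X ▷ (σ + Y^ℓ p_ℓ) = 2 σ_{,ℓ}(q) X^{iℓ}(q) p_i, and the right action of ŝ on n̂ is X ◁ (σ + Y^ℓ p_ℓ) = Σ_{k≥2} (−X^{i_1…i_k}_{,ℓ} Y^ℓ + k X^{i_1…i_{k−1}ℓ} Y^{i_k}_{,ℓ} + (k+1) σ_{,ℓ} X^{i_1…i_kℓ})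 p_{i_1}…p_{i_k}. -/
noncomputable section

/-- The last entry `i_k` of an index tuple (junk value if `k = 0`). -/
def lastEntry {n : ℕ} (hn : 0 < n) {k : ℕ} (I : Fin k → Fin n) : Fin n :=
  if h : 0 < k then I ⟨k - 1, Nat.sub_lt h Nat.one_pos⟩ else ⟨0, hn⟩

/-- The index tuple `(i₁, …, i_{k−1}, ℓ)` obtained by replacing the last entry by `ℓ`. -/
def replaceLast {n k : ℕ} (I : Fin k → Fin n) (ℓ : Fin n) : Fin k → Fin n :=
  if h : 0 < k then Function.update I ⟨k - 1, Nat.sub_lt h Nat.one_pos⟩ ℓ else I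

lemma MP.pdq_F {n N : ℕ} (X : (k : ℕ) → (Fin k → Fin n) → Coord n → ℝ)
    (hXsm : ∀ k I, ContDiff ℝ (⊤ : ℕ∞) (X k I)) (ℓ : Fin n) (q p : Coord n) :
    pdq ℓ (fun q p => ∑ k ∈ Finset.range (N + 1),
        ∑ I : Fin k → Fin n, X k I q * ∏ j, p (I j)) q p
    = ∑ k ∈ Finset.range (N + 1), ∑ I : Fin k → Fin n,
        pd ℓ (X k I) q * ∏ j, p (I j) := by
  have H : HasFDerivAt (fun q' => ∑ k ∈ Finset.range (N + 1),
      ∑ I : Fin k → Fin n, X k I q' * ∏ j, p (I j))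
      (∑ k ∈ Finset.range (N + 1), ∑ I : Fin k → Fin n,
        (∏ j, p (I j)) • fderiv ℝ (X k I) q) q := by
    apply HasFDerivAt.fun_sum; intro k _
    apply HasFDerivAt.fun_sum; intro I _
    exact (((hXsm k I).differentiable (by simp) q).hasFDerivAt).mul_const _
  simp only [pdq, H.fderiv, ContinuousLinearMap.coe_sum', Finset.sum_apply,
    ContinuousLinearMap.coe_smul', Pi.smul_apply, smul_eq_mul, pd]
  exact Finset.sum_congr rfl fun k _ => Finset.sum_congr rfl fun I _ => mul_comm _ _

lemma MP.pdp_F {n N : ℕ} (X : (k : ℕ) → (Fin k → Fin n) → Coord n → ℝ)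
    (ℓ : Fin n) (q p : Coord n) :
    pdp ℓ (fun q p => ∑ k ∈ Finset.range (N + 1),
        ∑ I : Fin k → Fin n, X k I q * ∏ j, p (I j)) q p
    = ∑ k ∈ Finset.range (N + 1), ∑ I : Fin k → Fin n, X k I q *
        ∑ j : Fin k, (if I j = ℓ then ∏ m ∈ Finset.univ.erase j, p (I m) else 0) := by
  have H : HasFDerivAt (fun p' : Coord n => ∑ k ∈ Finset.range (N + 1),
      ∑ I : Fin k → Fin n, X k I q * ∏ j, p' (I j))
      (∑ k ∈ Finset.range (N + 1), ∑ I : Fin k → Fin n,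
        X k I q • (∑ j : Fin k, (∏ m ∈ Finset.univ.erase j, p (I m)) •
          (ContinuousLinearMap.proj (I j) : Coord n →L[ℝ] ℝ))) p := by
    apply HasFDerivAt.fun_sum; intro k _
    apply HasFDerivAt.fun_sum; intro I _
    exact (HasFDerivAt.finset_prod
      (fun j _ => hasFDerivAt_apply (I j) p)).const_mul (X k I q)
  simp only [pdp, H.fderiv, ContinuousLinearMap.coe_sum', Finset.sum_apply,
    ContinuousLinearMap.coe_smul', Pi.smul_apply, smul_eq_mul,
    ContinuousLinearMap.proj_apply, Pi.single_apply, mul_ite, mul_one, mul_zero]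

lemma MP.pdq_G {n : ℕ} (σ : Coord n → ℝ) (Yv : Coord n → Coord n)
    (hσ : ContDiff ℝ (⊤ : ℕ∞) σ) (hY : ContDiff ℝ (⊤ : ℕ∞) Yv) (ℓ : Fin n) (q p : Coord n) :
    pdq ℓ (fun q p => σ q + ∑ m, Yv q m * p m) q p
    = pd ℓ σ q + ∑ m, pd ℓ (fun q' => Yv q' m) q * p m := by
  have hYm : ∀ m : Fin n, ContDiff ℝ (⊤ : ℕ∞) (fun q' => Yv q' m) := fun m =>
    (ContinuousLinearMap.proj (R := ℝ) (φ := fun _ : Fin n => ℝ) m).contDiff.comp hY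
  have H : HasFDerivAt (fun q' => σ q' + ∑ m, Yv q' m * p m)
      (fderiv ℝ σ q + ∑ m, p m • fderiv ℝ (fun q' => Yv q' m) q) q := by
    exact ((hσ.differentiable (by simp) q).hasFDerivAt).add
      (HasFDerivAt.fun_sum fun m _ =>
        (((hYm m).differentiable (by simp) q).hasFDerivAt).mul_const (p m))
  simp only [pdq, H.fderiv, ContinuousLinearMap.add_apply, ContinuousLinearMap.coe_sum',
    Finset.sum_apply, ContinuousLinearMap.coe_smul', Pi.smul_apply, smul_eq_mul, pd]
  congr 1
  exact Finset.sum_congr rfl fun m _ => mul_comm _ _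

lemma MP.pdp_G {n : ℕ} (σ : Coord n → ℝ) (Yv : Coord n → Coord n)
    (ℓ : Fin n) (q p : Coord n) :
    pdp ℓ (fun q p => σ q + ∑ m, Yv q m * p m) q p = Yv q ℓ := by
  have H : HasFDerivAt (fun p' : Coord n => σ q + ∑ m, Yv q m * p' m)
      (∑ m, Yv q m • (ContinuousLinearMap.proj m : Coord n →L[ℝ] ℝ)) p :=
    (HasFDerivAt.fun_sum fun m _ => (hasFDerivAt_apply m p).const_mul (Yv q m)).const_add (σ q)
  simp [pdp, H.fderiv, ContinuousLinearMap.coe_sum', Finset.sum_apply,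
    Pi.single_apply]


/-- Precomposition with a permutation, as an equiv on index tuples. -/
def MP.compEquiv {n k : ℕ} (τ : Equiv.Perm (Fin k)) :
    (Fin k → Fin n) ≃ (Fin k → Fin n) where
  toFun I := I ∘ τ
  invFun I := I ∘ τ.symm
  left_inv I := by funext m; simp [Function.comp]
  right_inv I := by funext m; simp [Function.comp]

/-- The reindexing `(I, m) ↦ (I[j ↦ m], I j)`, an involutive equiv. -/
def MP.updEquiv {n k : ℕ} (j : Fin (k + 1)) :
    ((Fin (k + 1) → Fin n) × Fin n) ≃ ((Fin (k + 1) → Fin n) × Fin n) where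
  toFun x := (Function.update x.1 j x.2, x.1 j)
  invFun x := (Function.update x.1 j x.2, x.1 j)
  left_inv x := by
    simp [Function.update_idem, Function.update_self, Function.update_eq_self]
  right_inv x := by
    simp [Function.update_idem, Function.update_self, Function.update_eq_self]

lemma MP.prod_erase_eq {k : ℕ} (f : Fin (k + 1) → ℝ) (j : Fin (k + 1)) :
    ∏ m ∈ Finset.univ.erase j, f m = ∏ i : Fin k, f (j.succAbove i) := by
  have himg : Finset.univ.erase j = Finset.image j.succAbove Finset.univ := by
    ext m
    simp only [Finset.mem_erase, Finset.mem_univ, and_true, Finset.mem_image, true_and]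
    constructor
    · intro hm; exact Fin.exists_succAbove_eq hm
    · rintro ⟨i, rfl⟩; exact Fin.succAbove_ne j i
  rw [himg, Finset.prod_image fun a _ b _ h => Fin.succAbove_right_injective h]

lemma MP.sum_insertNth {n k : ℕ} (j : Fin (k + 1)) (g : (Fin (k + 1) → Fin n) → ℝ) :
    ∑ I : Fin (k + 1) → Fin n, g I
    = ∑ J : Fin k → Fin n, ∑ ℓ : Fin n, g (j.insertNth ℓ J) := by
  rw [← Equiv.sum_comp (Fin.insertNthEquiv (fun _ => Fin n) j) g]
  rw [Fintype.sum_prod_type]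
  exact Finset.sum_comm

lemma MP.insertNth_perm {n k : ℕ} (j : Fin (k + 1)) (ℓ : Fin n) (J : Fin k → Fin n) :
    (Fin.snoc J ℓ) ∘ ((finSuccEquiv' j).trans (finSuccEquiv' (Fin.last k)).symm)
      = j.insertNth ℓ J := by
  funext m
  rcases eq_or_ne m j with rfl | hm
  · simp [Fin.insertNth_apply_same, Fin.snoc_last]
  · obtain ⟨i, rfl⟩ := Fin.exists_succAbove_eq hm
    simp only [Function.comp_apply, Equiv.trans_apply, finSuccEquiv'_succAbove,
      Fin.insertNth_apply_succAbove]
    rw [show (finSuccEquiv' (Fin.last k)).symm (some i) = Fin.castSucc i from ?_,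
      Fin.snoc_castSucc]
    rw [← finSuccEquiv'_succAbove, Equiv.symm_apply_apply, Fin.succAbove_last]

lemma MP.sumB {n k : ℕ} (c : (Fin (k + 1) → Fin n) → ℝ)
    (hc : ∀ (τ : Equiv.Perm (Fin (k + 1))) (I : Fin (k + 1) → Fin n), c (I ∘ τ) = c I)
    (g : Fin n → ℝ) (p : Coord n) (j : Fin (k + 1)) :
    ∑ I : Fin (k + 1) → Fin n, c I * g (I j) * ∏ m ∈ Finset.univ.erase j, p (I m)
    = ∑ J : Fin k → Fin n, (∑ ℓ : Fin n, g ℓ * c (Fin.snoc J ℓ)) * ∏ m, p (J m) := by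
  rw [MP.sum_insertNth j]
  refine Finset.sum_congr rfl fun J _ => ?_
  rw [Finset.sum_mul]
  refine Finset.sum_congr rfl fun ℓ _ => ?_
  rw [MP.prod_erase_eq]
  have h1 : c (j.insertNth ℓ J) = c (Fin.snoc J ℓ) := by
    rw [← MP.insertNth_perm j ℓ J, hc]
  rw [h1, Fin.insertNth_apply_same]
  simp only [Fin.insertNth_apply_succAbove]
  ring

lemma MP.sumC {n k : ℕ} (c : (Fin (k + 1) → Fin n) → ℝ)
    (hc : ∀ (τ : Equiv.Perm (Fin (k + 1))) (I : Fin (k + 1) → Fin n), c (I ∘ τ) = c I)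
    (h : Fin n → Fin n → ℝ) (p : Coord n) (j : Fin (k + 1)) :
    ∑ I : Fin (k + 1) → Fin n,
      c I * (∑ m, h (I j) m * p m) * ∏ m' ∈ Finset.univ.erase j, p (I m')
    = ∑ I : Fin (k + 1) → Fin n,
        (∑ ℓ : Fin n, c (Function.update I (Fin.last k) ℓ) * h ℓ (I (Fin.last k)))
          * ∏ m, p (I m) := by
  -- step 1: absorb `p m` into the product, via `update`
  have step1 : ∀ (I : Fin (k + 1) → Fin n) (m : Fin n),
      p m * ∏ m' ∈ Finset.univ.erase j, p (I m')
      = ∏ m', p (Function.update I j m m') := by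
    intro I m
    rw [← Finset.mul_prod_erase Finset.univ (fun m' => p (Function.update I j m m'))
      (Finset.mem_univ j), Function.update_self]
    congr 1
    refine Finset.prod_congr rfl fun m' hm' => ?_
    rw [Function.update_of_ne (Finset.mem_erase.mp hm').1]
  have lhs1 : ∑ I : Fin (k + 1) → Fin n,
      c I * (∑ m, h (I j) m * p m) * ∏ m' ∈ Finset.univ.erase j, p (I m')
      = ∑ I : Fin (k + 1) → Fin n, ∑ m : Fin n,
          c I * h (I j) m * ∏ m', p (Function.update I j m m') := by
    refine Finset.sum_congr rfl fun I _ => ?_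
    rw [Finset.mul_sum, Finset.sum_mul]
    refine Finset.sum_congr rfl fun m _ => ?_
    rw [← step1 I m]; ring
  rw [lhs1]
  -- step 2: reindex `(I, m) ↦ (update I j m, I j)`
  have step2 : ∑ I : Fin (k + 1) → Fin n, ∑ m : Fin n,
      c I * h (I j) m * ∏ m', p (Function.update I j m m')
      = ∑ I : Fin (k + 1) → Fin n, ∑ ℓ : Fin n,
          c (Function.update I j ℓ) * h ℓ (I j) * ∏ m', p (I m') := by
    have hsc := Equiv.sum_comp (MP.updEquiv (n := n) j)
      (fun x : (Fin (k + 1) → Fin n) × Fin n =>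
        c x.1 * h (x.1 j) x.2 * ∏ m', p (Function.update x.1 j x.2 m'))
    rw [← Fintype.sum_prod_type', ← Fintype.sum_prod_type', ← hsc]
    refine Finset.sum_congr rfl fun x _ => ?_
    show c (Function.update x.1 j x.2) * h (Function.update x.1 j x.2 j) (x.1 j) *
        ∏ m', p (Function.update (Function.update x.1 j x.2) j (x.1 j) m') = _
    rw [Function.update_self, Function.update_idem, Function.update_eq_self]
  rw [step2]
  -- step 3: move the distinguished slot `j` to `last` using a transposition
  set s : Equiv.Perm (Fin (k + 1)) := Equiv.swap j (Fin.last k) with hs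
  have upd : ∀ (I : Fin (k + 1) → Fin n) (ℓ : Fin n),
      Function.update (I ∘ s) (Fin.last k) ℓ = (Function.update I j ℓ) ∘ s := by
    intro I ℓ; funext m
    simp only [Function.update_apply, Function.comp_apply]
    by_cases hm : m = Fin.last k
    · subst hm; simp [hs, Equiv.swap_apply_right]
    · rw [if_neg hm, if_neg]
      intro hsm
      exact hm (by rw [← Equiv.symm_apply_apply s m, hsm, hs]; simp [Equiv.swap_apply_left])
  have step3 : ∑ I : Fin (k + 1) → Fin n, ∑ ℓ : Fin n,
      c (Function.update I j ℓ) * h ℓ (I j) * ∏ m', p (I m')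
      = ∑ I : Fin (k + 1) → Fin n, ∑ ℓ : Fin n,
          c (Function.update I (Fin.last k) ℓ) * h ℓ (I (Fin.last k)) * ∏ m', p (I m') := by
    rw [← Equiv.sum_comp (MP.compEquiv (n := n) s)
      (fun I => ∑ ℓ : Fin n, c (Function.update I (Fin.last k) ℓ) * h ℓ (I (Fin.last k)) *
        ∏ m', p (I m'))]
    refine Finset.sum_congr rfl fun I _ => ?_
    show _ = ∑ ℓ : Fin n, c (Function.update (I ∘ s) (Fin.last k) ℓ) *
        h ℓ ((I ∘ s) (Fin.last k)) * ∏ m', p ((I ∘ s) m')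
    have hprod : ∏ m', p ((I ∘ s) m') = ∏ m', p (I m') :=
      Equiv.prod_comp s fun m' => p (I m')
    refine Finset.sum_congr rfl fun ℓ _ => ?_
    rw [upd, hc, hprod]
    simp only [Function.comp_apply, hs, Equiv.swap_apply_right]
  rw [step3]
  exact Finset.sum_congr rfl fun I _ => (Finset.sum_mul _ _ _).symm



lemma MP.replaceLast_succ {n k : ℕ} (I : Fin (k + 1) → Fin n) (ℓ : Fin n) :
    replaceLast I ℓ = Function.update I (Fin.last k) ℓ := by
  unfold replaceLast
  rw [dif_pos (Nat.succ_pos k)]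
  rfl

lemma MP.lastEntry_succ {n k : ℕ} (hn : 0 < n) (I : Fin (k + 1) → Fin n) :
    lastEntry hn I = I (Fin.last k) := by
  unfold lastEntry
  rw [dif_pos (Nat.succ_pos k)]
  rfl

lemma MP.pd_zero {n : ℕ} (ℓ : Fin n) (q : Coord n) : pd ℓ (0 : Coord n → ℝ) q = 0 := by
  simp only [pd]
  rw [show (0 : Coord n → ℝ) = (fun _ => (0 : ℝ)) from rfl, fderiv_fun_const]
  simp

lemma MP.sum_split (f : ℕ → ℝ) (N : ℕ) (h0 : f 0 = 0) (h1 : N = 0 → f 1 = 0) :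
    ∑ k ∈ Finset.range (N + 1), f k = f 1 + ∑ k ∈ Finset.Icc 2 N, f k := by
  cases N with
  | zero =>
      rw [Finset.Icc_eq_empty (by norm_num), Finset.sum_empty, Finset.sum_range_one, h0, h1 rfl]
      norm_num
  | succ N' =>
      rw [Finset.sum_range_succ', Finset.sum_range_succ', h0, add_zero, add_comm]
      congr 1
      rw [← Finset.Ico_add_one_right_eq_Icc, Finset.sum_Ico_eq_sum_range]
      rw [show N' + 1 + 1 - 2 = N' from by omega]
      exact Finset.sum_congr rfl fun k _ => by congr 1; omega

namespace MP

variable {n : ℕ}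

def Ac (X : (k : ℕ) → (Fin k → Fin n) → Coord n → ℝ) (Yv : Coord n → Coord n)
    (q p : Coord n) (k : ℕ) : ℝ :=
  ∑ I : Fin k → Fin n, (-∑ ℓ : Fin n, pd ℓ (X k I) q * Yv q ℓ) * ∏ j, p (I j)

def Bc (X : (k : ℕ) → (Fin k → Fin n) → Coord n → ℝ) (σ : Coord n → ℝ)
    (q p : Coord n) (k : ℕ) : ℝ :=
  ∑ I : Fin k → Fin n,
    (((k : ℝ) + 1) * ∑ ℓ : Fin n, pd ℓ σ q * X (k + 1) (Fin.snoc I ℓ) q) * ∏ j, p (I j)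

def Cc (hn : 0 < n) (X : (k : ℕ) → (Fin k → Fin n) → Coord n → ℝ)
    (Yv : Coord n → Coord n) (q p : Coord n) (k : ℕ) : ℝ :=
  ∑ I : Fin k → Fin n,
    ((k : ℝ) * ∑ ℓ : Fin n,
      X k (replaceLast I ℓ) q * pd ℓ (fun q' => Yv q' (lastEntry hn I)) q) * ∏ j, p (I j)

end MP

/-- **The mutual actions of the matched pair `C^∞₀(T*Q) ≅ ŝ ⋈ n̂`.**
Let `σ̂ = σ(q) + Y^ℓ(q) p_ℓ ∈ ŝ` be affine in the momenta, and let
`X̂ = Σ_{k≥2} X^{i₁…i_k}(q) p_{i₁}…p_{i_k} ∈ n̂` (a finite sum of symmetric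
homogeneous components of degree `≥ 2`).  The matched pair actions obtained by
decomposing `−{X̂, σ̂} = X ▷ σ̂ + X ◁ σ̂ ∈ ŝ ⊕ n̂` are
`X ▷ σ̂ = 2 σ_{,ℓ} X^{iℓ} p_i` and
`X ◁ σ̂ = Σ_{k≥2} (−X^{i₁…i_k}_{,ℓ} Y^ℓ + k X^{i₁…i_{k−1}ℓ} Y^{i_k}_{,ℓ}
  + (k+1) σ_{,ℓ} X^{i₁…i_kℓ}) p_{i₁}…p_{i_k}`. -/
theorem matched_pair_actions_on_formal_power_series
    (n N : ℕ) (hn : 0 < n)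
    -- the homogeneous coefficient families of `X̂ ∈ n̂`
    (X : (k : ℕ) → (Fin k → Fin n) → Coord n → ℝ)
    (hX0 : ∀ I, X 0 I = 0) (hX1 : ∀ I, X 1 I = 0)
    (hXN : ∀ k, N < k → ∀ I, X k I = 0)
    (hXsm : ∀ k I, ContDiff ℝ (⊤ : ℕ∞) (X k I))
    (hXsym : ∀ (k : ℕ) (τ : Equiv.Perm (Fin k)) (I : Fin k → Fin n) (q : Coord n),
      X k (I ∘ τ) q = X k I q)
    -- the element `σ̂ = σ + Y^ℓ p_ℓ ∈ ŝ`
    (σ : Coord n → ℝ) (Yv : Coord n → Coord n)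
    (hσ : ContDiff ℝ (⊤ : ℕ∞) σ) (hY : ContDiff ℝ (⊤ : ℕ∞) Yv) :
    ∀ (q p : Coord n),
      -(pois
          (fun q p => ∑ k ∈ Finset.range (N + 1),
            ∑ I : Fin k → Fin n, X k I q * ∏ j, p (I j))
          (fun q p => σ q + ∑ ℓ, Yv q ℓ * p ℓ) q p)
      = -- the left action `X ▷ σ̂ = 2 σ_{,ℓ} X^{iℓ} p_i ∈ ŝ`
        (∑ i : Fin n, (2 * ∑ ℓ : Fin n, pd ℓ σ q * X 2 ![i, ℓ] q) * p i)
      + -- the right action `X ◁ σ̂ ∈ n̂`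
        ∑ k ∈ Finset.Icc 2 N, ∑ I : Fin k → Fin n,
          ((-(∑ ℓ : Fin n, pd ℓ (X k I) q * Yv q ℓ))
            + (k : ℝ) * ∑ ℓ : Fin n,
                X k (replaceLast I ℓ) q * pd ℓ (fun q' => Yv q' (lastEntry hn I)) q
            + ((k : ℝ) + 1) * ∑ ℓ : Fin n, pd ℓ σ q * X (k + 1) (Fin.snoc I ℓ) q)
          * ∏ j, p (I j) := by
  intro q p
  -- Step 1: compute the bracket via the four partial-derivative formulas
  have hpois : pois
      (fun q p => ∑ k ∈ Finset.range (N + 1),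
        ∑ I : Fin k → Fin n, X k I q * ∏ j, p (I j))
      (fun q p => σ q + ∑ ℓ, Yv q ℓ * p ℓ) q p
      = ∑ ℓ : Fin n,
          ((∑ k ∈ Finset.range (N + 1), ∑ I : Fin k → Fin n,
              pd ℓ (X k I) q * ∏ j, p (I j)) * Yv q ℓ
           - (pd ℓ σ q + ∑ m, pd ℓ (fun q' => Yv q' m) q * p m)
             * (∑ k ∈ Finset.range (N + 1), ∑ I : Fin k → Fin n, X k I q *
                 ∑ j : Fin k,
                   (if I j = ℓ then ∏ m ∈ Finset.univ.erase j, p (I m) else 0))) := by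
    simp only [pois]
    refine Finset.sum_congr rfl fun ℓ _ => ?_
    rw [MP.pdq_F X hXsm, MP.pdp_F X, MP.pdq_G σ Yv hσ hY, MP.pdp_G σ Yv]
  rw [hpois, Finset.sum_sub_distrib, neg_sub]
  -- Step 2: the `Y`-part
  have PA : (∑ ℓ : Fin n, (∑ k ∈ Finset.range (N + 1), ∑ I : Fin k → Fin n,
        pd ℓ (X k I) q * ∏ j, p (I j)) * Yv q ℓ)
      = ∑ k ∈ Finset.range (N + 1), ∑ I : Fin k → Fin n,
          (∑ ℓ : Fin n, pd ℓ (X k I) q * Yv q ℓ) * ∏ j, p (I j) := by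
    simp only [Finset.sum_mul]
    rw [Finset.sum_comm]
    refine Finset.sum_congr rfl fun k _ => ?_
    rw [Finset.sum_comm]
    refine Finset.sum_congr rfl fun I _ => ?_
    exact Finset.sum_congr rfl fun ℓ _ => by ring
  -- Step 3: the momentum-derivative part, with the `ℓ`-sum collapsed
  have PBC : (∑ ℓ : Fin n, (pd ℓ σ q + ∑ m, pd ℓ (fun q' => Yv q' m) q * p m)
        * (∑ k ∈ Finset.range (N + 1), ∑ I : Fin k → Fin n, X k I q *
            ∑ j : Fin k,
              (if I j = ℓ then ∏ m ∈ Finset.univ.erase j, p (I m) else 0)))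
      = ∑ k ∈ Finset.range (N + 1), ∑ I : Fin k → Fin n, X k I q * ∑ j : Fin k,
          (pd (I j) σ q + ∑ m, pd (I j) (fun q' => Yv q' m) q * p m)
            * ∏ m' ∈ Finset.univ.erase j, p (I m') := by
    simp only [Finset.mul_sum, mul_ite, mul_zero]
    rw [Finset.sum_comm]
    refine Finset.sum_congr rfl fun k _ => ?_
    rw [Finset.sum_comm]
    refine Finset.sum_congr rfl fun I _ => ?_
    rw [Finset.sum_comm]
    refine Finset.sum_congr rfl fun j _ => ?_
    rw [Finset.sum_ite_eq]
    simp only [Finset.mem_univ, if_true]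
    ring
  rw [PA, PBC]
  -- Step 4: per-degree identity coming from the symmetry of the coefficients
  have PHI : ∀ k' : ℕ,
      (∑ I : Fin (k' + 1) → Fin n, X (k' + 1) I q * ∑ j : Fin (k' + 1),
        (pd (I j) σ q + ∑ m, pd (I j) (fun q' => Yv q' m) q * p m) *
          ∏ m' ∈ Finset.univ.erase j, p (I m'))
      = MP.Bc X σ q p k' + MP.Cc hn X Yv q p (k' + 1) := by
    intro k'
    have hc : ∀ (τ : Equiv.Perm (Fin (k' + 1))) (I : Fin (k' + 1) → Fin n),
        (fun I => X (k' + 1) I q) (I ∘ τ) = (fun I => X (k' + 1) I q) I :=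
      fun τ I => hXsym (k' + 1) τ I q
    have expand : (∑ I : Fin (k' + 1) → Fin n, X (k' + 1) I q * ∑ j : Fin (k' + 1),
        (pd (I j) σ q + ∑ m, pd (I j) (fun q' => Yv q' m) q * p m) *
          ∏ m' ∈ Finset.univ.erase j, p (I m'))
        = ∑ j : Fin (k' + 1),
            ((∑ I : Fin (k' + 1) → Fin n, X (k' + 1) I q * pd (I j) σ q *
                ∏ m' ∈ Finset.univ.erase j, p (I m'))
             + ∑ I : Fin (k' + 1) → Fin n, X (k' + 1) I q *
                 (∑ m, pd (I j) (fun q' => Yv q' m) q * p m) *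
                   ∏ m' ∈ Finset.univ.erase j, p (I m')) := by
      have e1 : (∑ I : Fin (k' + 1) → Fin n, X (k' + 1) I q * ∑ j : Fin (k' + 1),
          (pd (I j) σ q + ∑ m, pd (I j) (fun q' => Yv q' m) q * p m) *
            ∏ m' ∈ Finset.univ.erase j, p (I m'))
          = ∑ I : Fin (k' + 1) → Fin n, ∑ j : Fin (k' + 1),
              (X (k' + 1) I q * pd (I j) σ q * ∏ m' ∈ Finset.univ.erase j, p (I m')
               + X (k' + 1) I q * (∑ m, pd (I j) (fun q' => Yv q' m) q * p m) *
                   ∏ m' ∈ Finset.univ.erase j, p (I m')) := by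
        refine Finset.sum_congr rfl fun I _ => ?_
        rw [Finset.mul_sum]
        exact Finset.sum_congr rfl fun j _ => by ring
      rw [e1, Finset.sum_comm]
      exact Finset.sum_congr rfl fun j _ => Finset.sum_add_distrib
    rw [expand]
    have eB := fun j => MP.sumB (fun I => X (k' + 1) I q) hc (fun ℓ => pd ℓ σ q) p j
    have eC := fun j => MP.sumC (fun I => X (k' + 1) I q) hc
      (fun ℓ m => pd ℓ (fun q' => Yv q' m) q) p j
    simp only [eB, eC]
    rw [Finset.sum_const, Finset.card_univ, Fintype.card_fin]
    have hBc : MP.Bc X σ q p k'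
        = ((k' : ℝ) + 1) * ∑ J : Fin k' → Fin n,
            (∑ ℓ : Fin n, pd ℓ σ q * X (k' + 1) (Fin.snoc J ℓ) q) * ∏ m, p (J m) := by
      rw [MP.Bc, Finset.mul_sum]
      exact Finset.sum_congr rfl fun I _ => by ring
    have hCc : MP.Cc hn X Yv q p (k' + 1)
        = ((k' : ℝ) + 1) * ∑ I : Fin (k' + 1) → Fin n,
            (∑ ℓ : Fin n, X (k' + 1) (Function.update I (Fin.last k') ℓ) q *
              pd ℓ (fun q' => Yv q' (I (Fin.last k'))) q) * ∏ m, p (I m) := by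
      rw [MP.Cc, Finset.mul_sum]
      refine Finset.sum_congr rfl fun I _ => ?_
      simp only [MP.replaceLast_succ, MP.lastEntry_succ]
      push_cast
      ring
    rw [hBc, hCc, nsmul_eq_mul]
    push_cast
    ring
  -- Step 5: assemble the degree sums
  have EPhi : (∑ k ∈ Finset.range (N + 1), ∑ I : Fin k → Fin n, X k I q * ∑ j : Fin k,
      (pd (I j) σ q + ∑ m, pd (I j) (fun q' => Yv q' m) q * p m) *
        ∏ m' ∈ Finset.univ.erase j, p (I m'))
      = (∑ k ∈ Finset.range (N + 1), MP.Bc X σ q p k)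
        + ∑ k ∈ Finset.range (N + 1), MP.Cc hn X Yv q p k := by
    rw [Finset.sum_range_succ']
    simp only [PHI]
    have hPhi0 : (∑ I : Fin 0 → Fin n, X 0 I q * ∑ j : Fin 0,
        (pd (I j) σ q + ∑ m, pd (I j) (fun q' => Yv q' m) q * p m) *
          ∏ m' ∈ Finset.univ.erase j, p (I m')) = 0 := by simp
    rw [hPhi0, add_zero, Finset.sum_add_distrib]
    congr 1
    · rw [Finset.sum_range_succ]
      have hBN : MP.Bc X σ q p N = 0 := by
        simp [MP.Bc, hXN (N + 1) (Nat.lt_succ_self N)]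
      rw [hBN, add_zero]
    · rw [Finset.sum_range_succ' (fun k => MP.Cc hn X Yv q p k)]
      have hC0 : MP.Cc hn X Yv q p 0 = 0 := by simp [MP.Cc]
      rw [hC0, add_zero]
  rw [EPhi]
  have EA : (∑ k ∈ Finset.range (N + 1), ∑ I : Fin k → Fin n,
      (∑ ℓ : Fin n, pd ℓ (X k I) q * Yv q ℓ) * ∏ j, p (I j))
      = -∑ k ∈ Finset.range (N + 1), MP.Ac X Yv q p k := by
    simp [MP.Ac, neg_mul, Finset.sum_neg_distrib]
  rw [EA, sub_neg_eq_add]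
  rw [← Finset.sum_add_distrib, ← Finset.sum_add_distrib]
  -- Step 6: split off the degrees `0` and `1`
  rw [MP.sum_split (fun k => MP.Bc X σ q p k + MP.Cc hn X Yv q p k + MP.Ac X Yv q p k) N]
  · -- match the two summands with the stated actions
    congr 1
    · -- degree 1 gives the left action
      have hA1 : MP.Ac X Yv q p 1 = 0 := by
        simp [MP.Ac, hX1, MP.pd_zero]
      have hC1 : MP.Cc hn X Yv q p 1 = 0 := by
        simp [MP.Cc, hX1]
      rw [hA1, hC1, add_zero, add_zero, MP.Bc]
      refine Fintype.sum_equiv (Equiv.funUnique (Fin 1) (Fin n)) _ _ fun J => ?_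
      have h2 : ∀ ℓ : Fin n, Fin.snoc J ℓ = ![J 0, ℓ] := by
        intro ℓ; funext m
        fin_cases m
        · simp [Fin.snoc]
        · simp [Fin.snoc]
      simp only [h2, Fin.prod_univ_one, Equiv.funUnique_apply]
      have hd : (default : Fin 1) = 0 := rfl
      rw [hd]
      norm_num
    · refine Finset.sum_congr rfl fun k hk => ?_
      rw [MP.Ac, MP.Bc, MP.Cc, ← Finset.sum_add_distrib, ← Finset.sum_add_distrib]
      exact Finset.sum_congr rfl fun I _ => by ring
  · -- degree 0 vanishes
    have : ∀ I : Fin 0 → Fin n, X 0 I = 0 := hX0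
    simp [MP.Ac, MP.Bc, MP.Cc, hX0, hX1, MP.pd_zero]
  · -- if `N = 0` the degree-1 term vanishes too
    intro hN
    subst hN
    have hX2 : ∀ I, X 2 I = 0 := hXN 2 (by omega)
    simp [MP.Ac, MP.Bc, MP.Cc, hX1, hX2, MP.pd_zero]

end
end

section
/- The generalized complete cotangent lift GCCL : 𝔗Q → 𝔛_Ham,0(T*Q), defined on a k-th order symmetric contravariant tensor field X^k by GCCL(X^k) = −k X^{i_1…i_{k−1}ℓ}(q) p_{i_1}…p_{i_{k−1}} ∂/∂q^ℓ + X^{i_1…i_k}_{,ℓ}(q) p_{i_1}…p_{i_k} ∂/∂p_ℓ, is a homomorphism of Lie algebras from (𝔗Q, symmetric Schouten concomitant) to the Hamiltonian vector fields on T*Q with the opposite Jacobi–Lie bracket. For k = 1 it equals minus the complete cotangent lift of a vector field. -/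
open scoped BigOperators

noncomputable section

/-- Points `(q, p)` of the cotangent bundle `T*Q`, in Darboux coordinates. -/
abbrev Phase (n : ℕ) : Type := Coord n × Coord n

/-- Directional derivative `∂h/∂q^ℓ` of a function on `T*Q`. -/
def dq {n : ℕ} (ℓ : Fin n) (h : Phase n → ℝ) : Phase n → ℝ :=
  fun z => fderiv ℝ h z (Pi.single ℓ 1, 0)

/-- Directional derivative `∂h/∂p_ℓ` of a function on `T*Q`. -/
def dp {n : ℕ} (ℓ : Fin n) (h : Phase n → ℝ) : Phase n → ℝ :=
  fun z => fderiv ℝ h z (0, Pi.single ℓ 1)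

/-- The Hamiltonian vector field `X_h = (∂h/∂p_ℓ) ∂/∂q^ℓ − (∂h/∂q^ℓ) ∂/∂p_ℓ`
of `h`, determined by `ι_{X_h} ω = dh` for `ω = dq^ℓ ∧ dp_ℓ`. -/
def hamVF {n : ℕ} (h : Phase n → ℝ) : Phase n → Phase n :=
  fun z => (fun ℓ => dp ℓ h z, fun ℓ => -(dq ℓ h z))

/-- The Jacobi–Lie bracket of vector fields on `T*Q`. -/
def jacobiLie {n : ℕ} (V W : Phase n → Phase n) : Phase n → Phase n :=
  fun z => fderiv ℝ W z (V z) - fderiv ℝ V z (W z)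


/-- The generalized complete cotangent lift
`GCCL(X^k) = −k X^{i₁…i_{k−1}ℓ}(q) p_{i₁}…p_{i_{k−1}} ∂/∂q^ℓ
           + X^{i₁…i_k}_{,ℓ}(q) p_{i₁}…p_{i_k} ∂/∂p_ℓ`
of a `k`-th order symmetric contravariant tensor field, as a (Hamiltonian)
vector field on `T*Q`. -/
def gccl {n : ℕ} (k : ℕ) (X : TF n k) : Phase n → Phase n :=
  fun z =>
    (fun ℓ => -(k : ℝ) * ∑ J : Fin (k - 1) → Fin n,
        X z.1 (fun t => if h : (t : ℕ) < k - 1 then J ⟨(t : ℕ), h⟩ else ℓ)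
          * ∏ j, z.2 (J j),
     fun ℓ => ∑ J : Fin k → Fin n, pd ℓ (fun q => X q J) z.1 * ∏ j, z.2 (J j))

/-- The complete cotangent lift `V^{c*} = V^ℓ ∂/∂q^ℓ − p_i V^i_{,ℓ} ∂/∂p_ℓ`
of a vector field `V` on `Q`. -/
def cotangentLift {n : ℕ} (V : Coord n → Coord n) : Phase n → Phase n :=
  fun z => (fun ℓ => V z.1 ℓ, fun ℓ => -(∑ i, z.2 i * pd ℓ (fun q => V q i) z.1))

/-- weak differentiability of a tensor field -/
def DiffT {n k : ℕ} (X : TF n k) : Prop := ∀ J, Differentiable ℝ (fun q => X q J)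

/-- the Hamiltonian function of a tensor field -/
def HH {n : ℕ} (k : ℕ) (X : TF n k) : Phase n → ℝ :=
  fun z => ∑ J : Fin k → Fin n, X z.1 J * ∏ j, z.2 (J j)

/-- the explicit derivative of `HH k X` -/
def DH {n : ℕ} (k : ℕ) (X : TF n k) (z : Phase n) : Phase n →L[ℝ] ℝ :=
  ∑ J : Fin k → Fin n,
    ((X z.1 J) • (∑ j : Fin k, (∏ j' ∈ Finset.univ.erase j, z.2 (J j')) •
         ((ContinuousLinearMap.proj (J j)).comp (ContinuousLinearMap.snd ℝ (Coord n) (Coord n))))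
     + (∏ j, z.2 (J j)) • ((fderiv ℝ (fun q => X q J) z.1).comp
         (ContinuousLinearMap.fst ℝ (Coord n) (Coord n))))

lemma hasFDerivAt_HH {n : ℕ} (k : ℕ) (X : TF n k) (hX : DiffT X) (z : Phase n) :
    HasFDerivAt (HH k X) (DH k X z) z := by
  unfold HH DH
  apply HasFDerivAt.fun_sum
  intro J _
  have h1 : HasFDerivAt (fun z : Phase n => X z.1 J)
      ((fderiv ℝ (fun q => X q J) z.1).comp (ContinuousLinearMap.fst ℝ (Coord n) (Coord n))) z :=
    ((hX J) z.1).hasFDerivAt.comp z (hasFDerivAt_fst)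
  have h2 : HasFDerivAt (fun z : Phase n => ∏ j, z.2 (J j))
      (∑ j : Fin k, (∏ j' ∈ Finset.univ.erase j, z.2 (J j')) •
        ((ContinuousLinearMap.proj (J j)).comp (ContinuousLinearMap.snd ℝ (Coord n) (Coord n)))) z := by
    have := HasFDerivAt.finset_prod (u := (Finset.univ : Finset (Fin k)))
      (g := fun j (z : Phase n) => z.2 (J j))
      (g' := fun j => (ContinuousLinearMap.proj (J j)).comp (ContinuousLinearMap.snd ℝ (Coord n) (Coord n)))
      (x := z) (fun j _ => ((ContinuousLinearMap.proj (J j)).comp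
        (ContinuousLinearMap.snd ℝ (Coord n) (Coord n))).hasFDerivAt)
    exact this
  exact h1.mul h2

lemma dq_HH {n : ℕ} (k : ℕ) (X : TF n k) (hX : DiffT X) (ℓ : Fin n) (z : Phase n) :
    dq ℓ (HH k X) z = ∑ J : Fin k → Fin n, pd ℓ (fun q => X q J) z.1 * ∏ j, z.2 (J j) := by
  have h := (hasFDerivAt_HH k X hX z).fderiv
  show fderiv ℝ (HH k X) z (Pi.single ℓ 1, 0) = _
  rw [h]
  unfold DH
  rw [ContinuousLinearMap.sum_apply]
  refine Finset.sum_congr rfl fun J _ => ?_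
  simp [pd, mul_comm]

lemma dp_HH_raw {n : ℕ} (k : ℕ) (X : TF n k) (hX : DiffT X) (ℓ : Fin n) (z : Phase n) :
    dp ℓ (HH k X) z = ∑ J : Fin k → Fin n, X z.1 J *
      ∑ j : Fin k, (∏ j' ∈ Finset.univ.erase j, z.2 (J j')) * (Pi.single ℓ 1 : Coord n) (J j) := by
  have h := (hasFDerivAt_HH k X hX z).fderiv
  show fderiv ℝ (HH k X) z (0, Pi.single ℓ 1) = _
  rw [h]
  unfold DH
  rw [ContinuousLinearMap.sum_apply]
  refine Finset.sum_congr rfl fun J _ => ?_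
  simp [Finset.mul_sum, mul_comm]

lemma prod_erase_last {r : ℕ} (g : Fin (r+1) → ℝ) :
    ∏ j' ∈ Finset.univ.erase (Fin.last r), g j' = ∏ j : Fin r, g j.castSucc := by
  rw [Fin.univ_castSuccEmb, Finset.erase_cons, Finset.prod_map]
  rfl

lemma snoc_eq_ext {n r : ℕ} (J : Fin r → Fin n) (ℓ : Fin n) :
    (Fin.snoc J ℓ : Fin (r+1) → Fin n)
      = fun t : Fin (r+1) => if h : (t : ℕ) < r then J ⟨(t : ℕ), h⟩ else ℓ := by
  funext t
  refine Fin.lastCases ?_ ?_ t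
  · simp
  · intro s
    have hs : ((s.castSucc : Fin (r+1)) : ℕ) < r := s.isLt
    simp only [Fin.snoc_castSucc, hs, dif_pos]
    congr 1

lemma comb {n : ℕ} (k : ℕ) (X : TF n k) (hs : SymmT X) (q p : Coord n) (ℓ : Fin n) :
    ∑ J : Fin k → Fin n, X q J *
      ∑ j : Fin k, (∏ j' ∈ Finset.univ.erase j, p (J j')) * (Pi.single ℓ 1 : Coord n) (J j)
    = (k:ℝ) * ∑ J : Fin (k-1) → Fin n,
        X q (fun t => if h : (t : ℕ) < k - 1 then J ⟨(t : ℕ), h⟩ else ℓ) * ∏ j, p (J j) := by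
  rcases k with _ | r
  · simp
  · have hswap : ∑ J : Fin (r+1) → Fin n, X q J *
        ∑ j : Fin (r+1), (∏ j' ∈ Finset.univ.erase j, p (J j')) * (Pi.single ℓ 1 : Coord n) (J j)
      = ∑ j : Fin (r+1), ∑ J : Fin (r+1) → Fin n,
          X q J * ((∏ j' ∈ Finset.univ.erase j, p (J j')) * (Pi.single ℓ 1 : Coord n) (J j)) := by
      rw [Finset.sum_comm]
      exact Finset.sum_congr rfl fun J _ => Finset.mul_sum _ _ _
    rw [hswap]
    have hstepA : ∀ j : Fin (r+1), ∑ J : Fin (r+1) → Fin n,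
        X q J * ((∏ j' ∈ Finset.univ.erase j, p (J j')) * (Pi.single ℓ 1 : Coord n) (J j))
      = ∑ J : Fin (r+1) → Fin n,
        X q J * ((∏ j' ∈ Finset.univ.erase (Fin.last r), p (J j')) *
          (Pi.single ℓ 1 : Coord n) (J (Fin.last r))) := by
      intro j
      set σ : Equiv.Perm (Fin (r+1)) := Equiv.swap j (Fin.last r) with hσ
      refine Fintype.sum_equiv (Equiv.arrowCongr σ (Equiv.refl (Fin n))) _ _ ?_
      intro J
      have hJσ : (Equiv.arrowCongr σ (Equiv.refl (Fin n))) J = J ∘ σ.symm := rfl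
      rw [hJσ]
      have h1 : X q (J ∘ ⇑σ.symm) = X q J := hs q σ.symm J
      have h2 : (J ∘ ⇑σ.symm) (Fin.last r) = J j := by
        simp [hσ, Equiv.symm_swap, Equiv.swap_apply_right]
      have h3 : ∏ j' ∈ Finset.univ.erase (Fin.last r), p ((J ∘ ⇑σ.symm) j')
          = ∏ j' ∈ Finset.univ.erase j, p (J j') := by
        refine Finset.prod_nbij' (fun a => σ.symm a) (fun a => σ a) ?_ ?_ ?_ ?_ ?_
        · intro a ha
          simp only [Finset.mem_erase, Finset.mem_univ, and_true] at ha ⊢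
          intro hcontra
          apply ha
          have : a = σ j := by rw [← hcontra]; simp
          rw [this]; simp [hσ, Equiv.swap_apply_left]
        · intro a ha
          simp only [Finset.mem_erase, Finset.mem_univ, and_true] at ha ⊢
          intro hcontra
          apply ha
          have : a = σ.symm (Fin.last r) := by rw [← hcontra]; simp
          rw [this]; simp [hσ, Equiv.symm_swap, Equiv.swap_apply_right]
        · intro a _; simp
        · intro a _; simp
        · intro a _; rfl
      rw [h1, h2, h3]
    have hstepB : ∑ J : Fin (r+1) → Fin n,
        X q J * ((∏ j' ∈ Finset.univ.erase (Fin.last r), p (J j')) *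
          (Pi.single ℓ 1 : Coord n) (J (Fin.last r)))
      = ∑ J : Fin r → Fin n,
          X q (fun t => if h : (t : ℕ) < r then J ⟨(t : ℕ), h⟩ else ℓ) * ∏ j, p (J j) := by
      have he : ∀ aJ : Fin n × (Fin r → Fin n),
          X q ((Fin.snocEquiv (fun _ => Fin n)) aJ) *
            ((∏ j' ∈ Finset.univ.erase (Fin.last r),
              p (((Fin.snocEquiv (fun _ => Fin n)) aJ) j')) *
              (Pi.single ℓ 1 : Coord n) (((Fin.snocEquiv (fun _ => Fin n)) aJ) (Fin.last r)))
          = X q (Fin.snoc aJ.2 aJ.1) *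
              ((∏ j : Fin r, p (aJ.2 j)) * (Pi.single ℓ 1 : Coord n) aJ.1) := by
        intro aJ
        have hco : ⇑((Fin.snocEquiv (fun _ => Fin n))) aJ = Fin.snoc aJ.2 aJ.1 := rfl
        rw [hco, prod_erase_last, Fin.snoc_last]
        simp [Fin.snoc_castSucc]
      rw [← Fintype.sum_equiv (Fin.snocEquiv (fun _ => Fin n))
        (fun aJ => X q (Fin.snoc aJ.2 aJ.1) *
          ((∏ j : Fin r, p (aJ.2 j)) * (Pi.single ℓ 1 : Coord n) aJ.1))
        _ (fun aJ => (he aJ).symm)]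
      rw [Fintype.sum_prod_type]
      have : ∀ a : Fin n, ∑ J : Fin r → Fin n, X q (Fin.snoc J a) *
          ((∏ j : Fin r, p (J j)) * (Pi.single ℓ 1 : Coord n) a)
          = if a = ℓ then ∑ J : Fin r → Fin n, X q (Fin.snoc J ℓ) * ∏ j : Fin r, p (J j) else 0 := by
        intro a
        rcases eq_or_ne a ℓ with h | h
        · subst h; simp [Pi.single_apply]
        · simp [Pi.single_apply, h]
      rw [Finset.sum_congr rfl (fun a _ => this a), Finset.sum_ite_eq' Finset.univ ℓ]
      simp only [Finset.mem_univ, if_pos]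
      refine Finset.sum_congr rfl fun J _ => ?_
      rw [snoc_eq_ext]
    calc ∑ j : Fin (r+1), ∑ J : Fin (r+1) → Fin n,
          X q J * ((∏ j' ∈ Finset.univ.erase j, p (J j')) * (Pi.single ℓ 1 : Coord n) (J j))
        = ∑ _j : Fin (r+1), ∑ J : Fin r → Fin n,
            X q (fun t => if h : (t : ℕ) < r then J ⟨(t : ℕ), h⟩ else ℓ) * ∏ j, p (J j) := by
          exact Finset.sum_congr rfl fun j _ => (hstepA j).trans hstepB
      _ = (↑(r+1) : ℝ) * ∑ J : Fin r → Fin n,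
            X q (fun t => if h : (t : ℕ) < r then J ⟨(t : ℕ), h⟩ else ℓ) * ∏ j, p (J j) := by
          rw [Finset.sum_const, Finset.card_univ, Fintype.card_fin, nsmul_eq_mul]
      _ = _ := rfl


lemma dp_HH {n : ℕ} (k : ℕ) (X : TF n k) (hX : DiffT X) (hs : SymmT X) (ℓ : Fin n) (z : Phase n) :
    dp ℓ (HH k X) z = (k:ℝ) * ∑ J : Fin (k-1) → Fin n,
      X z.1 (fun t => if h : (t : ℕ) < k - 1 then J ⟨(t : ℕ), h⟩ else ℓ) * ∏ j, z.2 (J j) := by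
  rw [dp_HH_raw k X hX ℓ z, comb k X hs z.1 z.2 ℓ]

lemma gccl_eq {n : ℕ} (k : ℕ) (X : TF n k) (hX : DiffT X) (hs : SymmT X) :
    gccl k X = fun z => -(hamVF (HH k X) z) := by
  funext z
  unfold gccl hamVF
  refine Prod.ext ?_ ?_
  · funext ℓ
    show -(k : ℝ) * _ = -(dp ℓ (HH k X) z)
    rw [dp_HH k X hX hs ℓ z, neg_mul]
  · funext ℓ
    show _ = - -(dq ℓ (HH k X) z)
    rw [neg_neg, dq_HH k X hX ℓ z]

lemma HH_symmetrize {n N : ℕ} (Z : TF n N) : HH N (symmetrize Z) = HH N Z := by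
  funext z
  unfold HH symmetrize
  have h1 : ∀ σ : Equiv.Perm (Fin N),
      ∑ I : Fin N → Fin n, Z z.1 (I ∘ σ) * ∏ i, z.2 (I i)
      = ∑ I : Fin N → Fin n, Z z.1 I * ∏ i, z.2 (I i) := by
    intro σ
    refine Fintype.sum_equiv (Equiv.arrowCongr σ.symm (Equiv.refl (Fin n))) _ _ ?_
    intro I
    have he : (Equiv.arrowCongr σ.symm (Equiv.refl (Fin n))) I = I ∘ ⇑σ := rfl
    rw [he]
    congr 1
    exact (Equiv.prod_comp σ (fun i => z.2 (I i))).symm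
  calc ∑ I : Fin N → Fin n,
        ((↑(Nat.factorial N) : ℝ)⁻¹ * ∑ σ : Equiv.Perm (Fin N), Z z.1 (I ∘ σ)) * ∏ i, z.2 (I i)
      = ∑ I : Fin N → Fin n, ∑ σ : Equiv.Perm (Fin N),
          (↑(Nat.factorial N) : ℝ)⁻¹ * (Z z.1 (I ∘ σ) * ∏ i, z.2 (I i)) := by
        refine Finset.sum_congr rfl fun I _ => ?_
        rw [mul_assoc, Finset.sum_mul, Finset.mul_sum]
    _ = ∑ σ : Equiv.Perm (Fin N), ∑ I : Fin N → Fin n,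
          (↑(Nat.factorial N) : ℝ)⁻¹ * (Z z.1 (I ∘ σ) * ∏ i, z.2 (I i)) := Finset.sum_comm
    _ = ∑ _σ : Equiv.Perm (Fin N),
          (↑(Nat.factorial N) : ℝ)⁻¹ * ∑ I : Fin N → Fin n, Z z.1 I * ∏ i, z.2 (I i) := by
        refine Finset.sum_congr rfl fun σ _ => ?_
        rw [← Finset.mul_sum, h1 σ]
    _ = ∑ I : Fin N → Fin n, Z z.1 I * ∏ i, z.2 (I i) := by
        rw [Finset.sum_const, Finset.card_univ, Fintype.card_perm, Fintype.card_fin,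
          nsmul_eq_mul, ← mul_assoc, mul_inv_cancel₀, one_mul]
        exact_mod_cast Nat.factorial_ne_zero N

lemma symmT_symmetrize {n N : ℕ} (Z : TF n N) : SymmT (symmetrize Z) := by
  intro q τ I
  unfold symmetrize
  congr 1
  exact Fintype.sum_equiv (Equiv.mulLeft τ) _ _ (fun σ => rfl)

lemma diff_pd {n : ℕ} {f : Coord n → ℝ} (hf : ContDiff ℝ (⊤ : ℕ∞) f) (i : Fin n) :
    Differentiable ℝ (pd i f) := by
  have h1 : ContDiff ℝ 1 (fderiv ℝ f) := hf.fderiv_right (WithTop.coe_le_coe.mpr le_top)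
  have h2 : ContDiff ℝ 1 (fun q => (fderiv ℝ f q) (Pi.single i 1)) :=
    ((ContinuousLinearMap.apply ℝ ℝ ((Pi.single i 1 : Coord n))).contDiff).comp h1
  exact h2.differentiable one_ne_zero

lemma contDiff_HH {n : ℕ} (k : ℕ) (X : TF n k) (hX : SmoothT X) :
    ContDiff ℝ (⊤ : ℕ∞) (HH k X) := by
  unfold HH
  refine ContDiff.sum fun J _ => ?_
  refine ContDiff.mul ((hX J).comp contDiff_fst) ?_
  refine contDiff_prod fun j _ => ?_
  exact (ContinuousLinearMap.contDiff
    ((ContinuousLinearMap.proj (J j)).comp (ContinuousLinearMap.snd ℝ (Coord n) (Coord n))))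


lemma dp_HH' {n : ℕ} (r : ℕ) (X : TF n (r+1)) (hX : DiffT X) (hs : SymmT X) (ℓ : Fin n)
    (z : Phase n) :
    dp ℓ (HH (r+1) X) z = (↑(r+1) : ℝ) * ∑ J : Fin r → Fin n,
      X z.1 (fun t => if h : (t : ℕ) < r then J ⟨(t : ℕ), h⟩ else ℓ) * ∏ j, z.2 (J j) := by
  exact_mod_cast dp_HH (r+1) X hX hs ℓ z

lemma helper {n : ℕ} (k m d : ℕ) (hd : d = k + m - 1) (X : TF n k) (Y : TF n m)
    (hX : DiffT X) (hXs : SymmT X) (hY : DiffT Y) (z : Phase n) :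
    ∑ I : Fin d → Fin n,
      ((k : ℝ) * ∑ ℓ : Fin n,
        X z.1 (fun j => if _ : (j : ℕ) < k - 1 then
              (if h2 : (m + (j : ℕ)) < d then I ⟨m + (j : ℕ), h2⟩ else ℓ) else ℓ)
          * pd ℓ (fun q' => Y q' (fun j => if h : (j : ℕ) < d then I ⟨(j : ℕ), h⟩ else ℓ)) z.1)
      * ∏ i, z.2 (I i)
    = ∑ s, dp s (HH k X) z * dq s (HH m Y) z := by
  rcases k with _ | r
  · -- k = 0 : both sides vanish
    have h0 : ∀ s, dp s (HH 0 X) z = 0 := by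
      intro s
      rw [dp_HH 0 X hX hXs s z]
      norm_num
    simp [h0]
  · -- k = r + 1
    have hd2 : d = m + r := by omega
    subst hd2
    -- rewrite the right-hand side
    have hR : ∀ s, dp s (HH (r+1) X) z * dq s (HH m Y) z
        = ∑ J₂ : Fin r → Fin n, ∑ J₁ : Fin m → Fin n,
            (↑(r+1) : ℝ) * (X z.1 (fun t => if h : (t : ℕ) < r then J₂ ⟨(t : ℕ), h⟩ else s)
              * ∏ j, z.2 (J₂ j)) * (pd s (fun q => Y q J₁) z.1 * ∏ j, z.2 (J₁ j)) := by
      intro s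
      rw [dp_HH' r X hX hXs s z, dq_HH m Y hY s z, mul_assoc, Finset.sum_mul_sum,
        Finset.mul_sum]
      refine Finset.sum_congr rfl fun J₂ _ => ?_
      rw [Finset.mul_sum]
      refine Finset.sum_congr rfl fun J₁ _ => ?_
      ring
    -- rewrite the left-hand side
    have hL : ∑ I : Fin (m+r) → Fin n,
        ((↑(r+1) : ℝ) * ∑ ℓ : Fin n,
          X z.1 (fun j => if _ : (j : ℕ) < r + 1 - 1 then
                (if h2 : (m + (j : ℕ)) < m + r then I ⟨m + (j : ℕ), h2⟩ else ℓ) else ℓ)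
            * pd ℓ (fun q' => Y q' (fun j => if h : (j : ℕ) < m + r then I ⟨(j : ℕ), h⟩ else ℓ)) z.1)
        * ∏ i, z.2 (I i)
      = ∑ s : Fin n, ∑ J₂ : Fin r → Fin n, ∑ J₁ : Fin m → Fin n,
          (↑(r+1) : ℝ) * (X z.1 (fun t => if h : (t : ℕ) < r then J₂ ⟨(t : ℕ), h⟩ else s)
            * ∏ j, z.2 (J₂ j)) * (pd s (fun q => Y q J₁) z.1 * ∏ j, z.2 (J₁ j)) := by
      -- expand products of sums and swap the ℓ-sum out
      have step1 : ∀ I : Fin (m+r) → Fin n,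
          ((↑(r+1) : ℝ) * ∑ ℓ : Fin n,
            X z.1 (fun j => if _ : (j : ℕ) < r + 1 - 1 then
                  (if h2 : (m + (j : ℕ)) < m + r then I ⟨m + (j : ℕ), h2⟩ else ℓ) else ℓ)
              * pd ℓ (fun q' => Y q' (fun j => if h : (j : ℕ) < m + r then I ⟨(j : ℕ), h⟩ else ℓ)) z.1)
          * ∏ i, z.2 (I i)
          = ∑ ℓ : Fin n, (↑(r+1) : ℝ) *
              (X z.1 (fun j => if _ : (j : ℕ) < r + 1 - 1 then
                  (if h2 : (m + (j : ℕ)) < m + r then I ⟨m + (j : ℕ), h2⟩ else ℓ) else ℓ)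
              * pd ℓ (fun q' => Y q' (fun j => if h : (j : ℕ) < m + r then I ⟨(j : ℕ), h⟩ else ℓ)) z.1
              * ∏ i, z.2 (I i)) := by
        intro I
        rw [mul_assoc, Finset.sum_mul, Finset.mul_sum]
      rw [Finset.sum_congr rfl fun I _ => step1 I, Finset.sum_comm]
      refine Finset.sum_congr rfl fun ℓ _ => ?_
      -- now reindex I ↦ (J₁, J₂)
      have hbij : Function.Bijective
          (fun JJ : (Fin m → Fin n) × (Fin r → Fin n) =>
            (Sum.elim JJ.1 JJ.2) ∘ ⇑finSumFinEquiv.symm) :=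
        ((Equiv.sumArrowEquivProdArrow (Fin m) (Fin r) (Fin n)).symm.trans
          (Equiv.arrowCongr finSumFinEquiv (Equiv.refl (Fin n)))).bijective
      refine Eq.trans (Eq.symm (Fintype.sum_bijective
        (fun JJ : (Fin m → Fin n) × (Fin r → Fin n) =>
          (Sum.elim JJ.1 JJ.2) ∘ ⇑finSumFinEquiv.symm)
        hbij
        (fun JJ => (↑(r+1) : ℝ) * (X z.1 (fun t => if h : (t : ℕ) < r then JJ.2 ⟨(t : ℕ), h⟩ else ℓ)
            * ∏ j, z.2 (JJ.2 j)) * (pd ℓ (fun q => Y q JJ.1) z.1 * ∏ j, z.2 (JJ.1 j)))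
        _ ?_)) ?_
      case _ =>
        rintro ⟨J₁, J₂⟩
        dsimp only
        set I : Fin (m+r) → Fin n := (Sum.elim J₁ J₂) ∘ ⇑finSumFinEquiv.symm with hI
        have harg1 : (fun j : Fin m => if h : (j : ℕ) < m + r then I ⟨(j : ℕ), h⟩ else ℓ) = J₁ := by
          funext j
          have hj : (j : ℕ) < m + r := lt_of_lt_of_le j.isLt (Nat.le_add_right m r)
          rw [dif_pos hj]
          have : (⟨(j : ℕ), hj⟩ : Fin (m+r)) = Fin.castAdd r j := by
            apply Fin.ext; rfl
          rw [this, hI]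
          show Sum.elim J₁ J₂ (finSumFinEquiv.symm (Fin.castAdd r j)) = J₁ j
          rw [finSumFinEquiv_symm_apply_castAdd]
          rfl
        have harg2 : (fun j : Fin (r+1) => if _ : (j : ℕ) < r + 1 - 1 then
              (if h2 : (m + (j : ℕ)) < m + r then I ⟨m + (j : ℕ), h2⟩ else ℓ) else ℓ)
            = (fun t : Fin (r+1) => if h : (t : ℕ) < r then J₂ ⟨(t : ℕ), h⟩ else ℓ) := by
          funext j
          rcases Nat.lt_or_ge (j : ℕ) r with hj | hj
          · have hj' : (j : ℕ) < r + 1 - 1 := by omega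
            have h2 : m + (j : ℕ) < m + r := by omega
            rw [dif_pos hj', dif_pos h2, dif_pos hj]
            have : (⟨m + (j : ℕ), h2⟩ : Fin (m+r)) = Fin.natAdd m ⟨(j : ℕ), hj⟩ := by
              apply Fin.ext; rfl
            rw [this, hI]
            show Sum.elim J₁ J₂ (finSumFinEquiv.symm (Fin.natAdd m ⟨(j : ℕ), hj⟩)) = J₂ ⟨(j : ℕ), hj⟩
            rw [finSumFinEquiv_symm_apply_natAdd]
            rfl
          · have hj' : ¬ ((j : ℕ) < r + 1 - 1) := by omega
            rw [dif_neg hj', dif_neg (by omega : ¬ ((j : ℕ) < r))]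
        have hprod : ∏ i, z.2 (I i) = (∏ j, z.2 (J₁ j)) * ∏ j, z.2 (J₂ j) := by
          rw [← Equiv.prod_comp finSumFinEquiv (fun i => z.2 (I i))]
          have : ∀ s : Fin m ⊕ Fin r, z.2 (I (finSumFinEquiv s)) = z.2 (Sum.elim J₁ J₂ s) := by
            intro s
            rw [hI]
            show z.2 (Sum.elim J₁ J₂ (finSumFinEquiv.symm (finSumFinEquiv s))) = _
            rw [Equiv.symm_apply_apply]
          rw [Finset.prod_congr rfl fun s _ => this s, Fintype.prod_sum_type]
          rfl
        rw [harg1, harg2, hprod]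
        ring
      case _ =>
        rw [Fintype.sum_prod_type]
        exact Finset.sum_comm
    rw [hL]
    exact (Finset.sum_congr rfl fun s _ => (hR s)).symm

-- the Poisson bracket
def PB {n : ℕ} (f g : Phase n → ℝ) : Phase n → ℝ :=
  fun z => ∑ s, dp s f z * dq s g z - ∑ s, dp s g z * dq s f z

def aV {n : ℕ} (s : Fin n) : Phase n := ((Pi.single s 1 : Coord n), 0)
def bV {n : ℕ} (s : Fin n) : Phase n := (0, (Pi.single s 1 : Coord n))

def CLapply {n : ℕ} (v : Phase n) : (Phase n →L[ℝ] ℝ) →L[ℝ] ℝ :=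
  ContinuousLinearMap.apply ℝ ℝ v

/-- the explicit derivative of `hamVF f` -/
def DHam {n : ℕ} (f : Phase n → ℝ) (z : Phase n) : Phase n →L[ℝ] Phase n :=
  ContinuousLinearMap.prod
    (ContinuousLinearMap.pi fun ℓ => (CLapply (bV ℓ)).comp (fderiv ℝ (fderiv ℝ f) z))
    (-(ContinuousLinearMap.pi fun ℓ => (CLapply (aV ℓ)).comp (fderiv ℝ (fderiv ℝ f) z)))

lemma hasFDerivAt_hamVF {n : ℕ} (f : Phase n → ℝ) (hf : ContDiff ℝ (⊤ : ℕ∞) f) (z : Phase n) :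
    HasFDerivAt (hamVF f) (DHam f z) z := by
  have hF : Differentiable ℝ (fderiv ℝ f) :=
    (hf.fderiv_right (m := 1) (WithTop.coe_le_coe.mpr le_top)).differentiable one_ne_zero
  have hcomp : ∀ v : Phase n, HasFDerivAt (fun z => fderiv ℝ f z v)
      ((CLapply v).comp (fderiv ℝ (fderiv ℝ f) z)) z := fun v =>
    ((CLapply v).hasFDerivAt).comp z (hF z).hasFDerivAt
  apply HasFDerivAt.prodMk
  · refine hasFDerivAt_pi'.mpr fun ℓ => ?_
    rw [ContinuousLinearMap.proj_pi]
    exact hcomp (bV ℓ)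
  · refine hasFDerivAt_pi'.mpr fun ℓ => ?_
    have : HasFDerivAt (fun z => -(fderiv ℝ f z (aV ℓ)))
        (-((CLapply (aV ℓ)).comp (fderiv ℝ (fderiv ℝ f) z))) z := (hcomp (aV ℓ)).neg
    simpa [dq, aV] using this

/-- explicit derivative of the Poisson bracket -/
def DPB {n : ℕ} (f g : Phase n → ℝ) (z : Phase n) : Phase n →L[ℝ] ℝ :=
  (∑ s : Fin n, ((fderiv ℝ f z (bV s)) • ((CLapply (aV s)).comp (fderiv ℝ (fderiv ℝ g) z))
      + (fderiv ℝ g z (aV s)) • ((CLapply (bV s)).comp (fderiv ℝ (fderiv ℝ f) z))))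
  - (∑ s : Fin n, ((fderiv ℝ g z (bV s)) • ((CLapply (aV s)).comp (fderiv ℝ (fderiv ℝ f) z))
      + (fderiv ℝ f z (aV s)) • ((CLapply (bV s)).comp (fderiv ℝ (fderiv ℝ g) z))))

lemma hasFDerivAt_PB {n : ℕ} (f g : Phase n → ℝ) (hf : ContDiff ℝ (⊤ : ℕ∞) f) (hg : ContDiff ℝ (⊤ : ℕ∞) g)
    (z : Phase n) : HasFDerivAt (PB f g) (DPB f g z) z := by
  have hF : Differentiable ℝ (fderiv ℝ f) :=
    (hf.fderiv_right (m := 1) (WithTop.coe_le_coe.mpr le_top)).differentiable one_ne_zero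
  have hG : Differentiable ℝ (fderiv ℝ g) :=
    (hg.fderiv_right (m := 1) (WithTop.coe_le_coe.mpr le_top)).differentiable one_ne_zero
  have hcf : ∀ v : Phase n, HasFDerivAt (fun z => fderiv ℝ f z v)
      ((CLapply v).comp (fderiv ℝ (fderiv ℝ f) z)) z := fun v =>
    ((CLapply v).hasFDerivAt).comp z (hF z).hasFDerivAt
  have hcg : ∀ v : Phase n, HasFDerivAt (fun z => fderiv ℝ g z v)
      ((CLapply v).comp (fderiv ℝ (fderiv ℝ g) z)) z := fun v =>
    ((CLapply v).hasFDerivAt).comp z (hG z).hasFDerivAt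
  exact HasFDerivAt.sub
    (HasFDerivAt.fun_sum fun s _ => (hcf (bV s)).mul (hcg (aV s)))
    (HasFDerivAt.fun_sum fun s _ => (hcg (bV s)).mul (hcf (aV s)))

/-- decomposition of a phase vector in the standard basis -/
lemma vdec {n : ℕ} (u v : Coord n) :
    ((u, v) : Phase n) = (∑ s, u s • aV s) + (∑ s, v s • bV s) := by
  have h1 : (∑ s, u s • aV s : Phase n) = (u, 0) := by
    rw [Prod.ext_iff]
    constructor
    · simp only [Prod.fst_sum, aV, Prod.smul_mk, smul_zero]
      rw [← Finset.univ_sum_single u]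
      refine (Finset.sum_congr rfl fun s _ => ?_)
      ext t
      simp [Pi.single_apply]
    · simp [Prod.snd_sum, aV]
  have h2 : (∑ s, v s • bV s : Phase n) = (0, v) := by
    rw [Prod.ext_iff]
    constructor
    · simp [Prod.fst_sum, bV]
    · simp only [Prod.snd_sum, bV, Prod.smul_mk, smul_zero]
      rw [← Finset.univ_sum_single v]
      refine (Finset.sum_congr rfl fun s _ => ?_)
      ext t
      simp [Pi.single_apply]
  rw [h1, h2]
  simp

lemma jacobi_ham {n : ℕ} (f g : Phase n → ℝ) (hf : ContDiff ℝ (⊤ : ℕ∞) f) (hg : ContDiff ℝ (⊤ : ℕ∞) g) :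
    jacobiLie (hamVF f) (hamVF g) = hamVF (PB f g) := by
  funext z
  have hdf := (hasFDerivAt_hamVF f hf z).fderiv
  have hdg := (hasFDerivAt_hamVF g hg z).fderiv
  have hdpb := (hasFDerivAt_PB f g hf hg z).fderiv
  have hsymf : ∀ v w : Phase n, fderiv ℝ (fderiv ℝ f) z v w = fderiv ℝ (fderiv ℝ f) z w v :=
    hf.contDiffAt.isSymmSndFDerivAt (by simp [minSmoothness_of_isRCLikeNormedField]; exact WithTop.coe_le_coe.mpr (le_top : (2:ℕ∞) ≤ ⊤))
  have hsymg : ∀ v w : Phase n, fderiv ℝ (fderiv ℝ g) z v w = fderiv ℝ (fderiv ℝ g) z w v :=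
    hg.contDiffAt.isSymmSndFDerivAt (by simp [minSmoothness_of_isRCLikeNormedField]; exact WithTop.coe_le_coe.mpr (le_top : (2:ℕ∞) ≤ ⊤))
  set F2 := fderiv ℝ (fderiv ℝ f) z with hF2
  set G2 := fderiv ℝ (fderiv ℝ g) z with hG2
  -- main scalar identity
  have key : ∀ c : Phase n, G2 (hamVF f z) c - F2 (hamVF g z) c = DPB f g z c := by
    intro c
    have hVf : hamVF f z = (∑ s, (fderiv ℝ f z (bV s)) • aV s)
        + (∑ s, (-(fderiv ℝ f z (aV s))) • bV s) := vdec _ _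
    have hVg : hamVF g z = (∑ s, (fderiv ℝ g z (bV s)) • aV s)
        + (∑ s, (-(fderiv ℝ g z (aV s))) • bV s) := vdec _ _
    rw [hVf, hVg]
    simp only [map_add, map_sum, map_smul, ContinuousLinearMap.add_apply,
      ContinuousLinearMap.coe_sum', Finset.sum_apply, ContinuousLinearMap.coe_smul',
      Pi.smul_apply, smul_eq_mul, DPB, ContinuousLinearMap.sub_apply,
      ContinuousLinearMap.coe_comp', Function.comp_apply, CLapply,
      ContinuousLinearMap.apply_apply, neg_mul, ← hF2, ← hG2]
    have e1 : ∀ s, G2 (aV s) c = G2 c (aV s) := fun s => hsymg _ _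
    have e2 : ∀ s, G2 (bV s) c = G2 c (bV s) := fun s => hsymg _ _
    have e3 : ∀ s, F2 (aV s) c = F2 c (aV s) := fun s => hsymf _ _
    have e4 : ∀ s, F2 (bV s) c = F2 c (bV s) := fun s => hsymf _ _
    simp only [e1, e2, e3, e4]
    simp only [Finset.sum_neg_distrib, Finset.sum_add_distrib]
    abel
  -- now conclude componentwise
  show fderiv ℝ (hamVF g) z (hamVF f z) - fderiv ℝ (hamVF f) z (hamVF g z) = hamVF (PB f g) z
  rw [hdf, hdg]
  have hPB1 : ∀ ℓ, dp ℓ (PB f g) z = DPB f g z (bV ℓ) := fun ℓ => by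
    show fderiv ℝ (PB f g) z _ = _
    rw [hdpb]; rfl
  have hPB2 : ∀ ℓ, dq ℓ (PB f g) z = DPB f g z (aV ℓ) := fun ℓ => by
    show fderiv ℝ (PB f g) z _ = _
    rw [hdpb]; rfl
  refine Prod.ext ?_ ?_
  · funext ℓ
    rw [Prod.fst_sub, Pi.sub_apply]
    show (DHam g z (hamVF f z)).1 ℓ - (DHam f z (hamVF g z)).1 ℓ = dp ℓ (PB f g) z
    rw [hPB1 ℓ]
    simp only [DHam, ContinuousLinearMap.prod_apply, ContinuousLinearMap.pi_apply,
      ContinuousLinearMap.coe_comp', Function.comp_apply, CLapply,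
      ContinuousLinearMap.apply_apply, ← hF2, ← hG2]
    exact key (bV ℓ)
  · funext ℓ
    rw [Prod.snd_sub, Pi.sub_apply]
    show (DHam g z (hamVF f z)).2 ℓ - (DHam f z (hamVF g z)).2 ℓ = -(dq ℓ (PB f g) z)
    rw [hPB2 ℓ]
    simp only [DHam, ContinuousLinearMap.prod_apply, ContinuousLinearMap.neg_apply,
      Pi.neg_apply, ContinuousLinearMap.pi_apply, ContinuousLinearMap.coe_comp',
      Function.comp_apply, CLapply, ContinuousLinearMap.apply_apply, ← hF2, ← hG2]
    rw [← key (aV ℓ)]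
    ring


lemma smoothT_diffT {n k : ℕ} {X : TF n k} (hX : SmoothT X) : DiffT X :=
  fun J => (hX J).differentiable (by simp)

lemma HH_schouten_eq {n : ℕ} (k m d : ℕ) (hd : d = k + m - 1) (X : TF n k) (Y : TF n m)
    (hX : DiffT X) (hXs : SymmT X) (hY : DiffT Y) (hYs : SymmT Y) :
    HH d (schouten k m d X Y) = PB (HH k X) (HH m Y) := by
  funext z
  show ∑ I : Fin d → Fin n, (schouten k m d X Y) z.1 I * ∏ i, z.2 (I i) = _
  unfold schouten
  have expand : ∑ I : Fin d → Fin n,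
      (((k : ℝ) * ∑ ℓ : Fin n,
        X z.1 (fun j => if _ : (j : ℕ) < k - 1 then
              (if h2 : (m + (j : ℕ)) < d then I ⟨m + (j : ℕ), h2⟩ else ℓ) else ℓ)
          * pd ℓ (fun q' => Y q' (fun j => if h : (j : ℕ) < d then I ⟨(j : ℕ), h⟩ else ℓ)) z.1)
      - ((m : ℝ) * ∑ ℓ : Fin n,
        Y z.1 (fun j => if _ : (j : ℕ) < m - 1 then
              (if h2 : (k + (j : ℕ)) < d then I ⟨k + (j : ℕ), h2⟩ else ℓ) else ℓ)
          * pd ℓ (fun q' => X q' (fun j => if h : (j : ℕ) < d then I ⟨(j : ℕ), h⟩ else ℓ)) z.1))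
      * ∏ i, z.2 (I i)
    = (∑ I : Fin d → Fin n,
        ((k : ℝ) * ∑ ℓ : Fin n,
          X z.1 (fun j => if _ : (j : ℕ) < k - 1 then
                (if h2 : (m + (j : ℕ)) < d then I ⟨m + (j : ℕ), h2⟩ else ℓ) else ℓ)
            * pd ℓ (fun q' => Y q' (fun j => if h : (j : ℕ) < d then I ⟨(j : ℕ), h⟩ else ℓ)) z.1)
        * ∏ i, z.2 (I i))
    - (∑ I : Fin d → Fin n,
        ((m : ℝ) * ∑ ℓ : Fin n,
          Y z.1 (fun j => if _ : (j : ℕ) < m - 1 then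
                (if h2 : (k + (j : ℕ)) < d then I ⟨k + (j : ℕ), h2⟩ else ℓ) else ℓ)
            * pd ℓ (fun q' => X q' (fun j => if h : (j : ℕ) < d then I ⟨(j : ℕ), h⟩ else ℓ)) z.1)
        * ∏ i, z.2 (I i)) := by
    rw [← Finset.sum_sub_distrib]
    refine Finset.sum_congr rfl fun I _ => ?_
    rw [sub_mul]
  rw [expand, helper k m d hd X Y hX hXs hY z,
    helper m k d (by omega) Y X hY hYs hX z]
  rfl

lemma diffT_symm_schouten {n k m d : ℕ} (X : TF n k) (Y : TF n m)
    (hX : SmoothT X) (hY : SmoothT Y) :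
    DiffT (symmetrize (schouten k m d X Y)) := by
  intro I
  unfold symmetrize schouten
  refine Differentiable.const_mul ?_ _
  refine Differentiable.fun_sum fun σ _ => ?_
  refine Differentiable.sub ?_ ?_
  · refine Differentiable.const_mul ?_ _
    refine Differentiable.fun_sum fun ℓ _ => ?_
    exact ((hX _).differentiable (by simp)).mul (diff_pd (hY _) ℓ)
  · refine Differentiable.const_mul ?_ _
    refine Differentiable.fun_sum fun ℓ _ => ?_
    exact ((hY _).differentiable (by simp)).mul (diff_pd (hX _) ℓ)

lemma jacobiLie_neg_neg {n : ℕ} (V W : Phase n → Phase n) :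
    jacobiLie (fun z => -(V z)) (fun z => -(W z)) = jacobiLie V W := by
  funext z
  unfold jacobiLie
  have h1 : fderiv ℝ (fun z => -(W z)) z = -(fderiv ℝ W z) := fderiv_neg
  have h2 : fderiv ℝ (fun z => -(V z)) z = -(fderiv ℝ V z) := fderiv_neg
  rw [h1, h2]
  simp

/-- **GCCL is a Lie algebra homomorphism.**
The generalized complete cotangent lift is a homomorphism of Lie algebras from
`(𝔗Q, symmetric Schouten concomitant)` to the Hamiltonian vector fields on
`T*Q` with the opposite Jacobi–Lie bracket:
`GCCL([X^k, Y^m]) = −[GCCL(X^k), GCCL(Y^m)]`.  For `k = 1` it equals minus the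
complete cotangent lift of a vector field. -/
theorem gccl_lie_algebra_homomorphism (n : ℕ) :
    -- homomorphism property (into the opposite Jacobi–Lie bracket)
    (∀ (k m : ℕ) (X : TF n k) (Y : TF n m),
      SmoothT X → SymmT X → SmoothT Y → SymmT Y →
      gccl (k + m - 1) (symmetrize (schouten k m (k + m - 1) X Y)) =
        fun z => -(jacobiLie (gccl k X) (gccl m Y) z)) ∧
    -- for `k = 1`, GCCL is minus the complete cotangent lift
    (∀ V : Coord n → Coord n, ContDiff ℝ (⊤ : ℕ∞) V →
      gccl 1 (fun q I => V q (I 0)) = fun z => -(cotangentLift V z)) := by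
  constructor
  · intro k m X Y hX hXs hY hYs
    have hXd : DiffT X := smoothT_diffT hX
    have hYd : DiffT Y := smoothT_diffT hY
    have h1 : gccl (k + m - 1) (symmetrize (schouten k m (k + m - 1) X Y))
        = fun z => -(hamVF (HH (k + m - 1) (symmetrize (schouten k m (k + m - 1) X Y))) z) :=
      gccl_eq _ _ (diffT_symm_schouten X Y hX hY) (symmT_symmetrize _)
    rw [h1, HH_symmetrize, HH_schouten_eq k m (k + m - 1) rfl X Y hXd hXs hYd hYs]
    have h4 := jacobi_ham (HH k X) (HH m Y) (contDiff_HH k X hX) (contDiff_HH m Y hY)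
    have h5 : gccl k X = fun z => -(hamVF (HH k X) z) := gccl_eq _ _ hXd hXs
    have h6 : gccl m Y = fun z => -(hamVF (HH m Y) z) := gccl_eq _ _ hYd hYs
    rw [h5, h6, jacobiLie_neg_neg, h4]
  · intro V _
    funext z
    unfold gccl cotangentLift
    refine Prod.ext ?_ ?_
    · funext ℓ
      rw [Prod.fst_neg]
      show -(1 : ℕ) * ∑ J : Fin 0 → Fin n, _ * ∏ j : Fin 0, z.2 (J j) = -(V z.1 ℓ)
      have hval : ∀ J : Fin 0 → Fin n,
          (fun q (I : Fin 1 → Fin n) => V q (I 0)) z.1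
            (fun t : Fin 1 => if h : (t : ℕ) < 1 - 1 then J ⟨(t : ℕ), h⟩ else ℓ)
          = V z.1 ℓ := by
        intro J
        show V z.1 (if h : ((0 : Fin 1) : ℕ) < 1 - 1 then J ⟨_, h⟩ else ℓ) = V z.1 ℓ
        norm_num
      rw [Finset.sum_congr rfl fun J _ => by
        rw [hval J, Fin.prod_univ_zero, mul_one]]
      rw [Finset.sum_const, Finset.card_univ]
      simp
    · funext ℓ
      rw [Prod.snd_neg]
      show ∑ J : Fin 1 → Fin n, pd ℓ (fun q => V q (J 0)) z.1 * ∏ j : Fin 1, z.2 (J j)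
        = - -(∑ i, z.2 i * pd ℓ (fun q => V q i) z.1)
      rw [neg_neg]
      refine Fintype.sum_equiv (Equiv.funUnique (Fin 1) (Fin n)) _ _ fun J => ?_
      rw [Fin.prod_univ_one]
      show pd ℓ (fun q => V q (J 0)) z.1 * z.2 (J 0) = z.2 (J 0) * pd ℓ (fun q => V q (J 0)) z.1
      ring

end
end
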